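/- arXiv:1912.12343 — 5 statements merged into one kernel-verified Lean document; each statement's English description precedes it below -/
import Mathlib

section
/- For every n ≥ 1 and every weak composition k ∈ Comp(n,n), the number of column-restricted parking functions of size n with column heights k equals the asymmetric multinomial coefficient: |CPF(n,k)| = ⟨⟨n;k⟩⟩. -/
/-!
Let `f ∈ CPF(n,k)`. Its smallest label has dominance index `0`, so every column left of its column
`j` is nonempty and `j < i_k`. Removing this label and then deleting the leftmost column left
empty, `z ≥ j`, gives an element of `CPF(n-1, k̃_j)`, and `insertMin z j` undoes this; hence the
counts satisfy the recursion defining `⟨⟨n;k⟩⟩`. Column `z` holds no label other than the removed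
one, so deleting it lowers the dominance index of each label right of `z` by exactly one and
leaves the others unchanged. A label left of `z` has only nonempty columns to its left, and each
column it dominates contains a distinct smaller label, so its dominance index stays below its
label either way. The parking condition transfers because the columns left of `z` are nonempty.
-/

open Finset

/-- The operation k ↦ k̃_j (0-based index `j`): decrease the `j`-th entry by 1,
then delete the leftmost zero entry of the resulting tuple. -/
def ktilde (k : List ℕ) (j : ℕ) : List ℕ :=
  (k.set j (k.getD j 0 - 1)).erase 0

/-- The asymmetric multinomial coefficient ⟨⟨n;k⟩⟩, defined by ⟨⟨1;(1)⟩⟩ = 1 and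
⟨⟨n;k⟩⟩ = Σ_{j=1}^{i_k-1} ⟨⟨n-1;k̃_j⟩⟩, where i_k is the (1-based) position of the
leftmost zero of k (i_k = n+1 if there is no zero), so that the sum has
`k.indexOf 0` terms (0-based j). -/
def amc : ℕ → List ℕ → ℕ
  | 0, _ => 0
  | 1, k => if k = [1] then 1 else 0
  | n + 2, k => ∑ j ∈ Finset.range (k.idxOf 0), amc (n + 1) (ktilde k j)

/-- `f : Fin n → Fin n` (0-based labels and columns) is a parking function:
for every `i ≤ n` at least `i` labels lie in the first `i` columns. -/
def IsParking (n : ℕ) (f : Fin n → Fin n) : Prop :=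
  ∀ i : ℕ, i ≤ n → i ≤ (univ.filter fun a => (f a : ℕ) < i).card

/-- The dominance index of the label `a`: the number of columns strictly to the left of
`a`'s column containing no label greater than `a`. -/
def domIndex {n : ℕ} (f : Fin n → Fin n) (a : Fin n) : ℕ :=
  (univ.filter fun c : Fin n => c < f a ∧ ∀ b, f b = c → b < a).card

/-- Column-restricted parking function: every (1-based) label `a+1` satisfies
`d_f(a) < a+1`. -/
def IsCPF (n : ℕ) (f : Fin n → Fin n) : Prop :=
  IsParking n f ∧ ∀ a : Fin n, domIndex f a < (a : ℕ) + 1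

/-- The list of column heights of `f`. -/
def colHeights {n : ℕ} (f : Fin n → Fin n) : List ℕ :=
  List.ofFn fun c : Fin n => (univ.filter fun a => f a = c).card

/-- The number of column-restricted parking functions of size `n`. -/
noncomputable def cpfCount (n : ℕ) : ℕ := Nat.card {f : Fin n → Fin n // IsCPF n f}

/-- The number of column-restricted parking functions of size `n` with column heights `k`. -/
noncomputable def cpfCountWith (n : ℕ) (k : List ℕ) : ℕ :=
  Nat.card {f : Fin n → Fin n // IsCPF n f ∧ colHeights f = k}

/-- A composition `k` of `n` of length `n` is Catalan if `k_1 + ⋯ + k_j ≥ j` for all `j < n`. -/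
def IsCatalan (n : ℕ) (k : List ℕ) : Prop :=
  ∀ j < n, j ≤ (k.take j).sum

lemma List.sum_set_add_getElem {M : Type*} [AddCommMonoid M] (l : List M) {i : ℕ} (v : M)
    (h : i < l.length) : (l.set i v).sum + l[i] = l.sum + v := by
  rw [List.sum_set, if_pos h, ← List.sum_take_add_sum_drop l i, List.drop_eq_getElem_cons h,
    List.sum_cons]
  abel

lemma List.getD_ne_of_lt_idxOf {α : Type*} [BEq α] [LawfulBEq α] {l : List α} {a : α} {i : ℕ}
    (d : α) (h : i < l.idxOf a) : l.getD i d ≠ a := by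
  rw [List.getD_eq_getElem _ _ (h.trans_le List.idxOf_le_length)]
  simpa using List.not_of_lt_findIdx h

lemma List.getD_eraseIdx {α : Type*} (l : List α) (z c : ℕ) (d : α) :
    (l.eraseIdx z).getD c d = l.getD (if c < z then c else c + 1) d := by
  simp only [List.getD_eq_getElem?_getD, List.getElem?_eraseIdx]
  split_ifs <;> rfl

def decAt (k : List ℕ) (j : ℕ) : List ℕ := k.set j (k.getD j 0 - 1)

/-- The column deleted by `ktilde k j`. -/
def gapCol (k : List ℕ) (j : ℕ) : ℕ := (decAt k j).idxOf 0

section Ktilde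

variable {N j : ℕ} {k : List ℕ}

lemma getD_decAt (c : ℕ) : (decAt k j).getD c 0 = k.getD c 0 - if c = j then 1 else 0 := by
  simp only [decAt, List.getD_eq_getElem?_getD, List.getElem?_set]
  split_ifs <;> simp_all

lemma getD_eq_getD_decAt_add (hj : j < k.idxOf 0) (c : ℕ) :
    k.getD c 0 = (decAt k j).getD c 0 + if c = j then 1 else 0 := by
  have := List.getD_ne_of_lt_idxOf 0 hj
  rw [getD_decAt]
  split_ifs with hc
  · subst hc; omega
  · rfl

lemma length_decAt : (decAt k j).length = k.length := List.length_set

lemma sum_decAt_add_one (hj : j < k.idxOf 0) : (decAt k j).sum + 1 = k.sum := by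
  have hjk : j < k.length := hj.trans_le List.idxOf_le_length
  have hkj := List.getD_ne_of_lt_idxOf 0 hj
  have := k.sum_set_add_getElem (k.getD j 0 - 1) hjk
  rw [← List.getD_eq_getElem _ 0 hjk] at this
  rw [decAt]
  omega

lemma getD_ktilde (c : ℕ) :
    (ktilde k j).getD c 0 = (decAt k j).getD (if c < gapCol k j then c else c + 1) 0 := by
  rw [ktilde, ← decAt, List.erase_eq_eraseIdx_of_idxOf rfl, List.getD_eraseIdx, gapCol]

lemma zero_mem_decAt (hlen : k.length = N + 1) (hsum : k.sum = N + 1) (hj : j < k.idxOf 0) :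
    0 ∈ decAt k j := by
  by_contra h0
  have := (decAt k j).length_le_sum_of_one_le fun x hx =>
    Nat.one_le_iff_ne_zero.2 fun h => h0 (h ▸ hx)
  have := sum_decAt_add_one hj
  rw [length_decAt] at *
  omega

lemma gapCol_lt (hlen : k.length = N + 1) (hsum : k.sum = N + 1) (hj : j < k.idxOf 0) :
    gapCol k j < N + 1 := by
  simpa [gapCol, length_decAt, hlen] using
    List.idxOf_lt_length_iff.2 (zero_mem_decAt hlen hsum hj)

lemma getD_decAt_gapCol (hlen : k.length = N + 1) (hsum : k.sum = N + 1) (hj : j < k.idxOf 0) :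
    (decAt k j).getD (gapCol k j) 0 = 0 := by
  have h := gapCol_lt hlen hsum hj
  rw [List.getD_eq_getElem _ _ (by rwa [length_decAt, hlen])]
  exact List.getElem_idxOf _

lemma le_gapCol (hlen : k.length = N + 1) (hsum : k.sum = N + 1) (hj : j < k.idxOf 0) :
    j ≤ gapCol k j := by
  by_contra! h
  have hz := getD_decAt_gapCol hlen hsum hj
  rw [getD_decAt, if_neg h.ne] at hz
  exact List.getD_ne_of_lt_idxOf 0 (h.trans hj) hz

lemma length_ktilde (hlen : k.length = N + 1) (hsum : k.sum = N + 1) (hj : j < k.idxOf 0) :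
    (ktilde k j).length = N := by
  have := gapCol_lt hlen hsum hj
  rw [ktilde, ← decAt, List.erase_eq_eraseIdx_of_idxOf rfl, List.length_eraseIdx, length_decAt]
  rw [gapCol] at this
  split_ifs <;> omega

lemma sum_ktilde (hlen : k.length = N + 1) (hsum : k.sum = N + 1) (hj : j < k.idxOf 0) :
    (ktilde k j).sum = N := by
  have := List.sum_erase (zero_mem_decAt hlen hsum hj)
  have := sum_decAt_add_one hj
  rw [ktilde, ← decAt]
  omega

end Ktilde

/-- Columns are indexed by natural numbers, so that `colCount f c = 0` for `c ≥ M`,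
as `List.getD · c 0` is for `c` past the end of a list. -/
def colCount {α : Type*} [Fintype α] {M : ℕ} (f : α → Fin M) (c : ℕ) : ℕ :=
  #{a | (f a : ℕ) = c}

section ColCount

variable {α : Type*} [Fintype α] {M : ℕ}

lemma colCount_ne_zero_iff {f : α → Fin M} {c : ℕ} :
    colCount f c ≠ 0 ↔ ∃ a, (f a : ℕ) = c := by
  simp [colCount]

lemma colCount_eq_zero_of_le (f : α → Fin M) {c : ℕ} (hc : M ≤ c) : colCount f c = 0 := by
  by_contra h
  obtain ⟨a, ha⟩ := colCount_ne_zero_iff.1 h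
  have := (f a).isLt
  omega

lemma card_filter_val_lt (f : α → Fin M) (i : ℕ) :
    #{a | (f a : ℕ) < i} = ∑ c ∈ range i, colCount f c := by
  rw [card_eq_sum_card_fiberwise (f := fun a => (f a : ℕ)) (t := range i)
    (fun a ha => by simpa using ha)]
  refine sum_congr rfl fun c hc => congrArg card ?_
  ext a
  simp only [mem_filter, mem_univ, true_and, and_iff_right_iff_imp]
  exact fun h => h ▸ mem_range.1 hc

lemma le_card_filter_val_lt {f : α → Fin M} {i : ℕ} (h : ∀ c < i, colCount f c ≠ 0) :
    i ≤ #{a | (f a : ℕ) < i} := by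
  rw [card_filter_val_lt]
  calc i = ∑ _c ∈ range i, 1 := by simp
    _ ≤ _ := sum_le_sum fun c hc => Nat.one_le_iff_ne_zero.2 (h c (mem_range.1 hc))

lemma colCount_cons {n : ℕ} (x : Fin M) (g : Fin n → Fin M) (c : ℕ) :
    colCount (Fin.cons x g : Fin (n + 1) → Fin M) c =
      (if (x : ℕ) = c then 1 else 0) + colCount g c := by
  simp only [colCount, card_filter, Fin.sum_univ_succ, Fin.cons_zero, Fin.cons_succ]

end ColCount

lemma colHeights_eq_iff {N : ℕ} {f : Fin N → Fin N} {k : List ℕ} :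
    colHeights f = k ↔ k.length = N ∧ ∀ c, colCount f c = k.getD c 0 := by
  have getD_colHeights (c : ℕ) : (colHeights f).getD c 0 = colCount f c := by
    rcases lt_or_ge c N with hc | hc
    · rw [List.getD_eq_getElem _ _ (by simpa [colHeights] using hc)]
      simp [colHeights, colCount, Fin.ext_iff]
    · rw [List.getD_eq_default _ _ (by simpa [colHeights] using hc),
        colCount_eq_zero_of_le f hc]
  constructor
  · rintro rfl
    exact ⟨by simp [colHeights], fun c => (getD_colHeights c).symm⟩
  · rintro ⟨hlen, hk⟩
    refine List.ext_getElem (by simp [colHeights, hlen]) fun c h₁ h₂ => ?_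
    rw [← List.getD_eq_getElem _ 0 h₁, ← List.getD_eq_getElem _ 0 h₂, getD_colHeights, hk]

lemma Fin.val_succAbove {n : ℕ} (z : Fin (n + 1)) (c : Fin n) :
    (z.succAbove c : ℕ) = if (c : ℕ) < z then (c : ℕ) else (c : ℕ) + 1 := by
  split_ifs with h
  · rw [Fin.succAbove_of_castSucc_lt _ _ (by simpa [Fin.lt_def] using h)]
    simp
  · rw [Fin.succAbove_of_le_castSucc _ _ (by simp [Fin.le_def]; omega)]
    simp

def insertMin {N : ℕ} (z j : Fin (N + 1)) (g : Fin N → Fin N) : Fin (N + 1) → Fin (N + 1) :=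
  Fin.cons j fun a => z.succAbove (g a)

section InsertMin

variable {N : ℕ} (z j : Fin (N + 1)) (g : Fin N → Fin N)

@[simp] lemma insertMin_zero : insertMin z j g 0 = j := rfl

@[simp] lemma insertMin_succ (a : Fin N) : insertMin z j g a.succ = z.succAbove (g a) := rfl

lemma colCount_succAbove_comp_self : colCount (fun a => z.succAbove (g a)) z = 0 := by
  simp [colCount, Fin.val_eq_val, Fin.succAbove_ne]

lemma colCount_succAbove_comp (c : ℕ) :
    colCount (fun a => z.succAbove (g a)) (if c < z then c else c + 1) = colCount g c := by
  simp only [colCount, Fin.val_succAbove]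
  congr 1
  ext a
  simp only [mem_filter, mem_univ, true_and]
  split_ifs <;> omega

lemma card_filter_insertMin_lt (i : ℕ) :
    #{a | (insertMin z j g a : ℕ) < i} =
      (if (j : ℕ) < i then 1 else 0) + #{a | (g a : ℕ) < if i ≤ z then i else i - 1} := by
  simp only [card_filter, Fin.sum_univ_succ, insertMin_zero, insertMin_succ, Fin.val_succAbove]
  congr 1
  refine sum_congr rfl fun a _ => ?_
  congr 1
  apply propext
  split_ifs <;> omega

end InsertMin

section DomIndex

variable {n : ℕ}

lemma domIndex_le_of_colCount_ne_zero {f : Fin n → Fin n} {a : Fin n}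
    (h : ∀ c < (f a : ℕ), colCount f c ≠ 0) : domIndex f a ≤ a := by
  have hsub : ({c | c < f a ∧ ∀ b, f b = c → b < a} : Finset _) ⊆ (Iio a).image f := by
    intro c hc
    simp only [mem_filter, mem_univ, true_and] at hc
    obtain ⟨b, hb⟩ := colCount_ne_zero_iff.1 (h c hc.1)
    exact mem_image.2 ⟨b, mem_Iio.2 (hc.2 b (Fin.ext hb)), Fin.ext hb⟩
  calc domIndex f a ≤ #((Iio a).image f) := card_le_card hsub
    _ ≤ #(Iio a) := card_image_le
    _ = a := Fin.card_Iio a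

lemma colCount_ne_zero_of_domIndex_eq_zero {f : Fin n → Fin n} {a : Fin n}
    (h : domIndex f a = 0) {c : ℕ} (hc : c < f a) : colCount f c ≠ 0 := by
  intro h0
  rw [domIndex, card_eq_zero, filter_eq_empty_iff] at h
  refine h (mem_univ ⟨c, hc.trans (f a).isLt⟩) ⟨hc, fun b hb => ?_⟩
  exact absurd h0 (colCount_ne_zero_iff.2 ⟨b, congrArg Fin.val hb⟩)

lemma domIndex_insertMin_succ (z j : Fin (n + 1)) (g : Fin n → Fin n) (a : Fin n) :
    domIndex (insertMin z j g) a.succ =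
      domIndex g a + if z < z.succAbove (g a) then 1 else 0 := by
  rw [domIndex, domIndex, card_filter, card_filter, Fin.sum_univ_succAbove _ z, add_comm]
  congr 1
  · refine sum_congr rfl fun c _ => ?_
    simp [Fin.forall_fin_succ, Fin.succAbove_lt_succAbove_iff, Fin.succ_pos]
  · simp [Fin.forall_fin_succ, Fin.succAbove_ne, Fin.succ_pos]

end DomIndex

section Bijection

variable {N : ℕ}

lemma isParking_insertMin_iff {z j : Fin (N + 1)} {g : Fin N → Fin N} (hjz : j ≤ z)
    (hpos : ∀ c < (z : ℕ), colCount g c ≠ 0) :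
    IsParking (N + 1) (insertMin z j g) ↔ IsParking N g := by
  have hjz' : (j : ℕ) ≤ z := hjz
  have hz : (z : ℕ) ≤ N := Nat.lt_succ_iff.1 z.isLt
  constructor
  · intro hF i hi
    by_cases hiz : i ≤ z
    · exact le_card_filter_val_lt fun c hc => hpos c (by omega)
    · have := hF (i + 1) (by omega)
      rw [card_filter_insertMin_lt, if_pos (by omega), if_neg (by omega),
        Nat.add_sub_cancel] at this
      omega
  · intro hg i hi
    rw [card_filter_insertMin_lt]
    by_cases hiz : i ≤ z
    · have := hg i (by omega)
      rw [if_pos hiz]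
      omega
    · have := hg (i - 1) (by omega)
      rw [if_neg hiz, if_pos (by omega)]
      omega

lemma domIndex_lt_insertMin_iff {z j : Fin (N + 1)} {g : Fin N → Fin N}
    (hpos : ∀ c < (z : ℕ), colCount g c ≠ 0)
    (hposF : ∀ c < (j : ℕ), colCount (insertMin z j g) c ≠ 0) :
    (∀ a, domIndex (insertMin z j g) a < a + 1) ↔ ∀ a, domIndex g a < a + 1 := by
  rw [Fin.forall_fin_succ]
  simp only [domIndex_insertMin_succ, Fin.val_succ, Fin.val_zero]
  constructor
  · rintro ⟨-, hF⟩ a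
    have := hF a
    split_ifs at this with hz
    · omega
    · have hlt : (g a : ℕ) < z := Fin.lt_def.1 <|
        (Fin.succAbove_lt_iff_castSucc_lt _ _).1 ((not_lt.1 hz).lt_of_ne (Fin.succAbove_ne _ _))
      exact Nat.lt_succ_of_le (domIndex_le_of_colCount_ne_zero fun c hc => hpos c (by omega))
  · intro hg
    refine ⟨?_, fun a => ?_⟩
    · have := domIndex_le_of_colCount_ne_zero (f := insertMin z j g) (a := 0)
        (by simpa using hposF)
      simp only [Fin.val_zero] at this
      omega
    · have := hg a
      split_ifs <;> omega

variable {k : List ℕ}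

lemma colHeights_insertMin_iff {z j : Fin (N + 1)} {g : Fin N → Fin N}
    (hlen : k.length = N + 1) (hsum : k.sum = N + 1) (hj : (j : ℕ) < k.idxOf 0)
    (hz : (z : ℕ) = gapCol k j) :
    colHeights (insertMin z j g) = k ↔ colHeights g = ktilde k j := by
  have hcols : (∀ C, colCount (fun a => z.succAbove (g a)) C = (decAt k j).getD C 0) ↔
      ∀ c, colCount g c = (decAt k j).getD (if c < z then c else c + 1) 0 := by
    constructor
    · intro h c
      rw [← colCount_succAbove_comp, h]
    · intro h C
      by_cases hC : C = z
      · rw [hC, colCount_succAbove_comp_self, hz, getD_decAt_gapCol hlen hsum hj]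
      · obtain ⟨c, rfl⟩ : ∃ c : ℕ, (if c < (z : ℕ) then c else c + 1) = C :=
          ⟨if C < z then C else C - 1, by split_ifs <;> omega⟩
        rw [colCount_succAbove_comp, h]
  rw [colHeights_eq_iff, colHeights_eq_iff, length_ktilde hlen hsum hj, insertMin]
  simp only [hlen, true_and, colCount_cons, getD_eq_getD_decAt_add hj, getD_ktilde, ← hz,
    ← hcols]
  refine forall_congr' fun C => ?_
  split_ifs <;> omega

lemma isCPF_and_colHeights_insertMin_iff {z j : Fin (N + 1)} {g : Fin N → Fin N}
    (hlen : k.length = N + 1) (hsum : k.sum = N + 1) (hj : (j : ℕ) < k.idxOf 0)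
    (hz : (z : ℕ) = gapCol k j) :
    (IsCPF (N + 1) (insertMin z j g) ∧ colHeights (insertMin z j g) = k) ↔
      (IsCPF N g ∧ colHeights g = ktilde k j) := by
  rw [colHeights_insertMin_iff hlen hsum hj hz]
  refine and_congr_left fun hg => ?_
  have hF := (colHeights_insertMin_iff hlen hsum hj hz).2 hg
  have hpos : ∀ c < (z : ℕ), colCount g c ≠ 0 := fun c hc => by
    rw [(colHeights_eq_iff.1 hg).2, getD_ktilde, ← hz, if_pos hc]
    exact List.getD_ne_of_lt_idxOf 0 (by rwa [hz] at hc)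
  have hposF : ∀ c < (j : ℕ), colCount (insertMin z j g) c ≠ 0 := fun c hc => by
    rw [(colHeights_eq_iff.1 hF).2]
    exact List.getD_ne_of_lt_idxOf 0 (hc.trans hj)
  have hjz : j ≤ z := Fin.le_def.2 (hz ▸ le_gapCol hlen hsum hj)
  exact and_congr (isParking_insertMin_iff hjz hpos) (domIndex_lt_insertMin_iff hpos hposF)

end Bijection

section Recursion

variable {N j : ℕ} {k : List ℕ}

lemma val_apply_zero_lt_idxOf {f : Fin (N + 1) → Fin (N + 1)} (hf : IsCPF (N + 1) f)
    (hk : colHeights f = k) : (f 0 : ℕ) < k.idxOf 0 := by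
  obtain ⟨hlen, hcount⟩ := colHeights_eq_iff.1 hk
  by_contra! h
  have hne : colCount f (k.idxOf 0) ≠ 0 := by
    rcases h.lt_or_eq with hlt | heq
    · exact colCount_ne_zero_of_domIndex_eq_zero (Nat.lt_one_iff.1 (hf.2 0)) hlt
    · exact colCount_ne_zero_iff.2 ⟨0, heq.symm⟩
  rw [hcount, List.getD_eq_getElem _ _ (by omega), List.getElem_idxOf] at hne
  exact hne rfl

lemma card_fiber_eq_cpfCountWith_ktilde (hlen : k.length = N + 1) (hsum : k.sum = N + 1)
    (hj : j < k.idxOf 0) :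
    Nat.card {f : Fin (N + 1) → Fin (N + 1) //
        (IsCPF (N + 1) f ∧ colHeights f = k) ∧ (f 0 : ℕ) = j} =
      cpfCountWith N (ktilde k j) := by
  set j' : Fin (N + 1) := ⟨j, hj.trans_le (hlen ▸ List.idxOf_le_length)⟩
  set z : Fin (N + 1) := ⟨gapCol k j, gapCol_lt hlen hsum hj⟩
  symm
  refine Nat.card_eq_of_bijective
    (fun g => ⟨insertMin z j' g.1,
      (isCPF_and_colHeights_insertMin_iff hlen hsum hj rfl).2 g.2, rfl⟩)
    ⟨?_, ?_⟩
  · rintro ⟨g, _⟩ ⟨g', _⟩ h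
    ext a : 2
    simpa using congrFun (congrArg Subtype.val h) a.succ
  · rintro ⟨f, hf, hf0⟩
    have havoid (a : Fin N) : f a.succ ≠ z := by
      intro ha
      have hcount := (colHeights_eq_iff.1 hf.2).2 (gapCol k j)
      rw [← Fin.cons_self_tail f, colCount_cons, getD_eq_getD_decAt_add hj,
        getD_decAt_gapCol hlen hsum hj, hf0] at hcount
      have : colCount (Fin.tail f) (gapCol k j) ≠ 0 :=
        colCount_ne_zero_iff.2 ⟨a, congrArg Fin.val ha⟩
      split_ifs at hcount <;> omega
    choose g hg using fun a => Fin.exists_succAbove_eq (havoid a)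
    have hfg : f = insertMin z j' g := by
      funext a
      cases a using Fin.cases with
      | zero => exact Fin.ext hf0
      | succ a => exact (hg a).symm
    subst hfg
    exact ⟨⟨g, (isCPF_and_colHeights_insertMin_iff hlen hsum hj rfl).1 hf⟩, rfl⟩

lemma cpfCountWith_succ (hlen : k.length = N + 1) (hsum : k.sum = N + 1) :
    cpfCountWith (N + 1) k = ∑ j ∈ range (k.idxOf 0), cpfCountWith N (ktilde k j) := by
  classical
  rw [← sum_congr rfl fun j hj =>
    card_fiber_eq_cpfCountWith_ktilde hlen hsum (mem_range.1 hj)]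
  simp only [cpfCountWith, Nat.card_eq_fintype_card, Fintype.card_subtype]
  rw [card_eq_sum_card_fiberwise (f := fun f => (f 0 : ℕ)) (t := range (k.idxOf 0))
    fun f hf => ?_]
  · simp [filter_filter]
  · simp only [coe_filter, mem_univ, true_and, Set.mem_ofPred_eq] at hf
    simpa using val_apply_zero_lt_idxOf hf.1 hf.2

end Recursion

lemma cpfCountWith_zero_nil : cpfCountWith 0 [] = 1 := by
  rw [cpfCountWith, Nat.card_eq_one_iff_unique]
  refine ⟨⟨fun f g => Subtype.ext (Subsingleton.elim _ _)⟩,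
    ⟨⟨finZeroElim, ⟨?_, finZeroElim⟩, rfl⟩⟩⟩
  intro i hi
  simp [Nat.le_zero.1 hi]

/-- For every n ≥ 1 and every weak composition k ∈ Comp(n,n),
|CPF(n,k)| = ⟨⟨n;k⟩⟩. -/
theorem statement0 (n : ℕ) (hn : 1 ≤ n) (k : List ℕ)
    (hlen : k.length = n) (hsum : k.sum = n) :
    cpfCountWith n k = amc n k := by
  induction n using Nat.strong_induction_on generalizing k with
  | _ n ih =>
    match n, hn with
    | 1, _ =>
      obtain ⟨a, rfl⟩ := List.length_eq_one_iff.1 hlen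
      obtain rfl : a = 1 := by simpa using hsum
      simp [cpfCountWith_succ hlen hsum, ktilde, cpfCountWith_zero_nil, amc]
    | m + 2, _ =>
      rw [cpfCountWith_succ hlen hsum, amc]
      refine sum_congr rfl fun j hj => ih (m + 1) (by omega) (by omega) _ ?_ ?_
      · exact length_ktilde hlen hsum (mem_range.1 hj)
      · exact sum_ktilde hlen hsum (mem_range.1 hj)
end

section
/- For every n ≥ 1, the sum of the asymmetric multinomial coefficients over all weak compositions of n of length n equals the odd double factorial: Σ_{k ∈ Comp(n,n)} ⟨⟨n;k⟩⟩ = (2n−1)!!. -/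
open Finset

/-!
For `j ≤ i`, `k ↦ k̃_j` is a bijection from the compositions in `Comp(n+1,n+1)` with `i_k = i + 2`
onto those in `Comp(n,n)` with `i_k > i`: if `k_j = 1` this entry is deleted, and if `k_j ≥ 2` the
leftmost zero of `k` is deleted instead (it exists because the entries of `k` sum to its length).
Splitting off the terms with `i_k = i + 1` and using the defining recursion therefore gives
`tailSum (n+2) i = i · tailSum (n+1) (i-1) + tailSum (n+2) (i+1)`, from which
`2^d d! · tailSum n i = (n+d)!` for `i + d = n` follows by induction. At `i = 0` the right side is
`(2n)! = 2^n n! (2n-1)!!`.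
-/

namespace List

variable {α : Type*}

theorem exists_eq_append_cons_of_mem {a : α} {l : List α} (h : a ∈ l) :
    ∃ M Q, l = M ++ a :: Q ∧ a ∉ M := by
  induction l with
  | nil => simp at h
  | cons b t ih =>
    by_cases hb : b = a
    · exact ⟨[], t, by simp [hb], by simp⟩
    · obtain ⟨M, Q, rfl, hM⟩ := ih (by simpa [Ne.symm hb] using h)
      exact ⟨b :: M, Q, rfl, by simp [Ne.symm hb, hM]⟩

theorem modify_append_length_cons (f : α → α) (A : List α) (b : α) (R : List α) :
    (A ++ b :: R).modify A.length f = A ++ f b :: R := by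
  induction A with
  | nil => simp
  | cons x A ih => simp [ih]

theorem length_le_sum_of_zero_notMem {l : List ℕ} (h : 0 ∉ l) : l.length ≤ l.sum :=
  length_le_sum_of_one_le l fun _ hx => Nat.one_le_iff_ne_zero.2 fun hx0 => h (hx0 ▸ hx)

variable [BEq α] [LawfulBEq α]

theorem idxOf_append_cons_of_notMem {a b : α} {A : List α} (hA : a ∉ A) (hb : b ≠ a)
    (R : List α) : (A ++ b :: R).idxOf a = A.length + R.idxOf a + 1 := by
  rw [idxOf_append_of_notMem hA, idxOf_cons_ne _ hb, Nat.add_succ]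

theorem exists_eq_append_of_le_idxOf {a : α} {l : List α} {j : ℕ} (h : j ≤ l.idxOf a) :
    ∃ A R, l = A ++ R ∧ a ∉ A ∧ A.length = j := by
  have hj : j ≤ l.length := h.trans idxOf_le_length
  refine ⟨l.take j, l.drop j, (take_append_drop j l).symm, fun ha => ?_, length_take_of_le hj⟩
  have := ((take_prefix j l).mem_iff_idxOf_lt_length a).1 ha
  grind

theorem exists_eq_append_cons_of_lt_idxOf {a : α} {l : List α} {j : ℕ} (h : j < l.idxOf a) :
    ∃ A b R, l = A ++ b :: R ∧ a ∉ A ∧ A.length = j ∧ b ≠ a := by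
  obtain ⟨A, R, rfl, hA, rfl⟩ := exists_eq_append_of_le_idxOf h.le
  rw [idxOf_append_of_notMem hA] at h
  cases R with
  | nil => simp at h
  | cons b R => exact ⟨A, b, R, rfl, hA, rfl, fun hb => by simp [hb] at h⟩

end List

open List

theorem ktilde_append_one_cons {A : List ℕ} (hA : 0 ∉ A) (R : List ℕ) :
    ktilde (A ++ 1 :: R) A.length = A ++ R := by
  simp [ktilde, erase_append_right _ hA]

theorem ktilde_append_add_two_cons {A M : List ℕ} (hA : 0 ∉ A) (hM : 0 ∉ M) (b : ℕ)
    (Q : List ℕ) : ktilde (A ++ (b + 2) :: (M ++ 0 :: Q)) A.length = A ++ (b + 1) :: (M ++ Q) := by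
  have hAM : 0 ∉ A ++ (b + 1) :: M := by simp [hA, hM]
  simpa [ktilde] using erase_append_right (0 :: Q) hAM

/-- Inverse of `ktilde · j` on the compositions with `i_k = i + 2`. -/
def ktildeInv (i j : ℕ) (m : List ℕ) : List ℕ :=
  if i < m.idxOf 0 then (m.take (i + 1) ++ 0 :: m.drop (i + 1)).modify j (· + 1)
  else m.take j ++ 1 :: m.drop j

theorem ktildeInv_append {A R : List ℕ} {i : ℕ} (h : (A ++ R).idxOf 0 = i) :
    ktildeInv i A.length (A ++ R) = A ++ 1 :: R := by
  simp [ktildeInv, h]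

theorem ktildeInv_append_add_one_cons {A M : List ℕ} (hA : 0 ∉ A) (hM : 0 ∉ M) (b : ℕ)
    (Q : List ℕ) :
    ktildeInv (A.length + M.length) A.length (A ++ (b + 1) :: (M ++ Q)) =
      A ++ (b + 2) :: (M ++ 0 :: Q) := by
  have hAM : 0 ∉ A ++ (b + 1) :: M := by simp [hA, hM]
  have hsplit : A ++ (b + 1) :: (M ++ Q) = (A ++ (b + 1) :: M) ++ Q := by simp
  have hlen : (A ++ (b + 1) :: M).length = A.length + M.length + 1 := by
    simp only [length_append, length_cons]; omega
  rw [ktildeInv, if_pos (by rw [hsplit, idxOf_append_of_notMem hAM]; omega), hsplit,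
    take_left' hlen, drop_left' hlen]
  simpa using modify_append_length_cons (· + 1) A (b + 1) (M ++ 0 :: Q)

theorem eq_append_one_cons_or_eq_append_add_two_cons {L : List ℕ} {j : ℕ}
    (hs : L.sum = L.length) (hj : j < L.idxOf 0) :
    (∃ A R, L = A ++ 1 :: R ∧ 0 ∉ A ∧ A.length = j) ∨
      ∃ A M b Q, L = A ++ (b + 2) :: (M ++ 0 :: Q) ∧ 0 ∉ A ∧ 0 ∉ M ∧ A.length = j := by
  obtain ⟨A, a, R, rfl, hA, rfl, ha⟩ := exists_eq_append_cons_of_lt_idxOf hj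
  obtain rfl | ⟨b, rfl⟩ : a = 1 ∨ ∃ b, a = b + 2 := by
    rcases a with _ | _ | b <;> simp_all
  · exact .inl ⟨A, R, rfl, hA, rfl⟩
  · have hR : 0 ∈ R := by
      by_contra hR
      have := length_le_sum_of_zero_notMem hA
      have := length_le_sum_of_zero_notMem hR
      simp only [sum_append, List.sum_cons, length_append, length_cons] at hs
      omega
    obtain ⟨M, Q, rfl, hM⟩ := exists_eq_append_cons_of_mem hR
    exact .inr ⟨A, M, b, Q, rfl, hA, hM, rfl⟩

theorem eq_append_or_eq_append_add_one_cons {m : List ℕ} {i j : ℕ} (hj : j ≤ i)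
    (hi : i ≤ m.idxOf 0) :
    (∃ A R, m = A ++ R ∧ 0 ∉ A ∧ A.length = j ∧ m.idxOf 0 = i) ∨
      ∃ A M b Q, m = A ++ (b + 1) :: (M ++ Q) ∧ 0 ∉ A ∧ 0 ∉ M ∧ A.length = j ∧
        A.length + M.length = i := by
  rcases hi.eq_or_lt with rfl | hi
  · obtain ⟨A, R, rfl, hA, rfl⟩ := exists_eq_append_of_le_idxOf hj
    exact .inl ⟨A, R, rfl, hA, rfl, rfl⟩
  · obtain ⟨A, c, R, rfl, hA, rfl, hc⟩ := exists_eq_append_cons_of_lt_idxOf (hj.trans_lt hi)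
    obtain ⟨b, rfl⟩ := Nat.exists_eq_succ_of_ne_zero hc
    rw [idxOf_append_of_notMem hA, idxOf_cons_ne _ hc] at hi
    obtain ⟨M, Q, rfl, hM, hMlen⟩ :=
      exists_eq_append_of_le_idxOf (a := 0) (l := R) (j := i - A.length) (by omega)
    exact .inr ⟨A, M, b, Q, rfl, hA, hM, rfl, by omega⟩

/-- `Comp(n, n)`, as a finset of lists. -/
def comps (n : ℕ) : Finset (List ℕ) := (Finset.Nat.antidiagonalTuple n n).image List.ofFn

theorem mem_comps {n : ℕ} {L : List ℕ} : L ∈ comps n ↔ L.length = n ∧ L.sum = n := by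
  constructor
  · rintro h
    obtain ⟨v, hv, rfl⟩ := Finset.mem_image.mp h
    rw [Finset.Nat.mem_antidiagonalTuple] at hv
    exact ⟨length_ofFn, by rw [sum_ofFn]; exact hv⟩
  · rintro ⟨rfl, hs⟩
    refine Finset.mem_image.mpr ⟨L.get, ?_, ofFn_get L⟩
    rw [Finset.Nat.mem_antidiagonalTuple, ← sum_ofFn, ofFn_get]
    exact hs

theorem ktilde_mem_and_ktildeInv_ktilde {N i j : ℕ} {L : List ℕ} (hj : j ≤ i)
    (hL : L ∈ (comps (N + 1)).filter (·.idxOf 0 = i + 1)) :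
    ktilde L j ∈ (comps N).filter (i ≤ ·.idxOf 0) ∧ ktildeInv i j (ktilde L j) = L := by
  simp only [Finset.mem_filter, mem_comps] at hL ⊢
  obtain ⟨⟨hlen, hsum⟩, hidx⟩ := hL
  rcases eq_append_one_cons_or_eq_append_add_two_cons (hsum.trans hlen.symm) (j := j) (by omega)
    with ⟨A, R, rfl, hA, rfl⟩ | ⟨A, M, b, Q, rfl, hA, hM, rfl⟩
  · rw [idxOf_append_cons_of_notMem hA one_ne_zero, ← idxOf_append_of_notMem hA] at hidx
    rw [ktilde_append_one_cons hA, ktildeInv_append (Nat.add_right_cancel hidx)]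
    simp only [length_append, length_cons, sum_append, List.sum_cons, and_true] at hlen hsum ⊢
    omega
  · rw [idxOf_append_cons_of_notMem hA (by omega : b + 2 ≠ 0), idxOf_append_of_notMem hM,
      idxOf_cons_self] at hidx
    rw [ktilde_append_add_two_cons hA hM, show i = A.length + M.length by omega,
      ktildeInv_append_add_one_cons hA hM, idxOf_append_cons_of_notMem hA b.succ_ne_zero,
      idxOf_append_of_notMem hM]
    simp only [length_append, length_cons, sum_append, List.sum_cons, and_true] at hlen hsum ⊢
    omega

theorem ktildeInv_mem_and_ktilde_ktildeInv {N i j : ℕ} {m : List ℕ} (hj : j ≤ i)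
    (hm : m ∈ (comps N).filter (i ≤ ·.idxOf 0)) :
    ktildeInv i j m ∈ (comps (N + 1)).filter (·.idxOf 0 = i + 1) ∧
      ktilde (ktildeInv i j m) j = m := by
  simp only [Finset.mem_filter, mem_comps] at hm ⊢
  obtain ⟨⟨hlen, hsum⟩, hidx⟩ := hm
  rcases eq_append_or_eq_append_add_one_cons hj hidx
    with ⟨A, R, rfl, hA, rfl, hidx'⟩ | ⟨A, M, b, Q, rfl, hA, hM, rfl, rfl⟩
  · rw [ktildeInv_append hidx', ktilde_append_one_cons hA,
      idxOf_append_cons_of_notMem hA one_ne_zero, ← idxOf_append_of_notMem hA, hidx']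
    simp only [length_append, length_cons, sum_append, List.sum_cons, and_true] at hlen hsum ⊢
    omega
  · rw [ktildeInv_append_add_one_cons hA hM, ktilde_append_add_two_cons hA hM,
      idxOf_append_cons_of_notMem hA (by omega : b + 2 ≠ 0), idxOf_append_of_notMem hM,
      idxOf_cons_self]
    simp only [length_append, length_cons, sum_append, List.sum_cons, and_true] at hlen hsum ⊢
    omega

theorem sum_comp_ktilde_filter_idxOf_eq {β : Type*} [AddCommMonoid β] (f : List ℕ → β)
    {N i j : ℕ} (hj : j ≤ i) :
    ∑ L ∈ (comps (N + 1)).filter (·.idxOf 0 = i + 1), f (ktilde L j) =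
      ∑ m ∈ (comps N).filter (i ≤ ·.idxOf 0), f m :=
  Finset.sum_nbij' (ktilde · j) (ktildeInv i j)
    (fun _ hL => (ktilde_mem_and_ktildeInv_ktilde hj hL).1)
    (fun _ hm => (ktildeInv_mem_and_ktilde_ktildeInv hj hm).1)
    (fun _ hL => (ktilde_mem_and_ktildeInv_ktilde hj hL).2)
    (fun _ hm => (ktildeInv_mem_and_ktilde_ktildeInv hj hm).2)
    (fun _ _ => rfl)

/-- The part of `∑_{k ∈ Comp(n,n)} ⟨⟨n;k⟩⟩` over those `k` with `i_k > i`. -/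
def tailSum (n i : ℕ) : ℕ := ∑ L ∈ (comps n).filter (i ≤ ·.idxOf 0), amc n L

theorem amc_of_idxOf_eq_zero {n : ℕ} {k : List ℕ} (hk : k.idxOf 0 = 0) : amc n k = 0 := by
  match n with
  | 0 => rfl
  | 1 => rw [amc, if_neg]; rintro rfl; simp at hk
  | n + 2 => simp [amc, hk]

theorem sum_amc_filter_idxOf_eq_mul_tailSum (N i : ℕ) :
    ∑ L ∈ (comps (N + 2)).filter (·.idxOf 0 = i), amc (N + 2) L = i * tailSum (N + 1) (i - 1) := by
  rcases i with _ | i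
  · simp [Finset.sum_eq_zero fun L hL => amc_of_idxOf_eq_zero (Finset.mem_filter.1 hL).2]
  · calc ∑ L ∈ (comps (N + 2)).filter (·.idxOf 0 = i + 1), amc (N + 2) L
          = ∑ j ∈ Finset.range (i + 1),
              ∑ L ∈ (comps (N + 2)).filter (·.idxOf 0 = i + 1), amc (N + 1) (ktilde L j) := by
            rw [Finset.sum_comm]
            refine Finset.sum_congr rfl fun L hL => ?_
            rw [amc, (Finset.mem_filter.1 hL).2]
        _ = (i + 1) * tailSum (N + 1) i := by
            rw [Finset.sum_congr rfl fun j hj => sum_comp_ktilde_filter_idxOf_eq (amc (N + 1))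
              (Nat.lt_succ_iff.1 (Finset.mem_range.1 hj))]
            simp [tailSum]

theorem tailSum_eq_add_tailSum_succ (n i : ℕ) :
    tailSum n i = ∑ L ∈ (comps n).filter (·.idxOf 0 = i), amc n L + tailSum n (i + 1) := by
  rw [tailSum, tailSum, ← Finset.sum_filter_add_sum_filter_not _ (·.idxOf 0 = i),
    Finset.filter_filter, Finset.filter_filter]
  congr 2 <;> refine Finset.filter_congr fun L _ => ?_ <;> omega

theorem tailSum_of_lt {n i : ℕ} (h : n < i) : tailSum n i = 0 := by
  refine Finset.sum_eq_zero fun L hL => absurd (Finset.mem_filter.1 hL) ?_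
  rw [mem_comps]
  rintro ⟨⟨rfl, -⟩, hi⟩
  exact absurd (hi.trans idxOf_le_length) h.not_ge

open Nat in
theorem two_pow_mul_factorial_mul_tailSum (N : ℕ) :
    ∀ i d, i + d = N + 1 → 2 ^ d * d ! * tailSum (N + 1) i = (N + 1 + d)! := by
  induction N with
  | zero =>
    intro i d h
    obtain ⟨rfl, rfl⟩ | ⟨rfl, rfl⟩ : i = 1 ∧ d = 0 ∨ i = 0 ∧ d = 1 := by omega
    · decide
    · decide
  | succ N ih =>
    have hfiber : ∀ i d, i + d = N + 2 →
        2 ^ d * d ! * (i * tailSum (N + 1) (i - 1)) = i * (N + 1 + d)! := by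
      rintro (_ | i) d h
      · simp
      · rw [Nat.add_sub_cancel, ← ih i d (by omega)]; ring
    intro i d h
    induction d generalizing i with
    | zero =>
      obtain rfl : i = N + 2 := h
      rw [tailSum_eq_add_tailSum_succ, sum_amc_filter_idxOf_eq_mul_tailSum,
        tailSum_of_lt (lt_add_one (N + 2)), add_zero, hfiber _ 0 rfl, Nat.factorial_succ (N + 1)]
    | succ d ihd =>
      rw [tailSum_eq_add_tailSum_succ, sum_amc_filter_idxOf_eq_mul_tailSum]
      calc 2 ^ (d + 1) * (d + 1)! * (i * tailSum (N + 1) (i - 1) + tailSum (N + 2) (i + 1))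
          = 2 ^ (d + 1) * (d + 1)! * (i * tailSum (N + 1) (i - 1)) +
              2 * (d + 1) * (2 ^ d * d ! * tailSum (N + 2) (i + 1)) := by
            rw [Nat.factorial_succ]; ring
        _ = (i + 2 * (d + 1)) * (N + 1 + 1 + d)! := by
            rw [hfiber i (d + 1) h, ihd (i + 1) (by omega),
              show N + 1 + (d + 1) = N + 1 + 1 + d by omega]
            ring
        _ = (N + 1 + 1 + (d + 1))! := by
            rw [← add_assoc, Nat.factorial_succ, show i + 2 * (d + 1) = N + 1 + 1 + d + 1 by omega]

theorem sum_antidiagonalTuple_amc_eq_tailSum (n : ℕ) :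
    ∑ v ∈ Finset.Nat.antidiagonalTuple n n, amc n (List.ofFn v) = tailSum n 0 := by
  rw [tailSum, Finset.filter_true_of_mem fun _ _ => Nat.zero_le _, comps,
    Finset.sum_image fun _ _ _ _ h => List.ofFn_injective h]

/-- For every n ≥ 1, Σ_{k ∈ Comp(n,n)} ⟨⟨n;k⟩⟩ = (2n-1)!!. -/
theorem statement1 (n : ℕ) (hn : 1 ≤ n) :
    ∑ v ∈ Finset.Nat.antidiagonalTuple n n, amc n (List.ofFn v) =
      Nat.doubleFactorial (2 * n - 1) := by
  obtain ⟨m, rfl⟩ := Nat.exists_eq_add_of_le' hn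
  have hclosed := two_pow_mul_factorial_mul_tailSum m 0 (m + 1) (zero_add _)
  have hfactorial : (m + 1 + (m + 1)).factorial =
      2 ^ (m + 1) * (m + 1).factorial * (2 * m + 1).doubleFactorial := by
    rw [show m + 1 + (m + 1) = 2 * m + 1 + 1 by ring, Nat.factorial_eq_mul_doubleFactorial,
      show 2 * m + 1 + 1 = 2 * (m + 1) by ring, Nat.doubleFactorial_two_mul]
  rw [sum_antidiagonalTuple_amc_eq_tailSum, show 2 * (m + 1) - 1 = 2 * m + 1 by omega]
  exact Nat.eq_of_mul_eq_mul_left (by positivity) (hclosed.trans hfactorial)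
end

section
/- For every n ≥ 2, |CPF(n)| = (2n−1)·|CPF(n−1)|, i.e. the number of column-restricted parking functions of size n is (2n−1) times the number of column-restricted parking functions of size n−1. -/
open Finset

/-!
Labels and columns are 0-based. Removing the smallest label `0` from a column-restricted parking
function `f` of size `m + 1`, together with the leftmost column `e` holding no other label, leaves
a column-restricted parking function `g` of size `m`. Conversely `f` is recovered from `g`, `e` and
`c = f 0`, and the admissible data are exactly `c ≤ e ≤ z(g)`, where `z(g)` is the first empty
column of `g`; moreover `z(f) = z(g) + 1` if `c = e` and `z(f) = e` otherwise. So the number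
`N(m, w)` of `f ∈ CPF(m)` with `z(f) ≥ w` satisfies `N(m + 1, z + 1) = N(m + 1, z + 2) + (z + 1) N(m, z)`,
which is solved by `N(w + d, w) · d! · 2^d = (w + 2d)!`. In particular `|CPF(n)| = (2n)! / (n! 2^n)`.
-/

lemma Fin.val_succAbove_s3 {m : ℕ} (e : Fin (m + 1)) (d : Fin m) :
    (e.succAbove d : ℕ) = if (d : ℕ) < e then (d : ℕ) else (d : ℕ) + 1 := by
  unfold Fin.succAbove
  split_ifs <;> simp_all [Fin.lt_def, Fin.val_succ]

namespace CPF

instance (n : ℕ) : DecidablePred (IsParking n) := fun f => by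
  unfold IsParking; infer_instance

instance (n : ℕ) : DecidablePred (IsCPF n) := fun f => by
  unfold IsCPF; infer_instance

section FirstEmpty

variable {α : Type*} [Fintype α] {k : ℕ}

/-- The leftmost empty column of `f`, or `k` if there is none. -/
def firstEmpty (f : α → Fin k) : ℕ :=
  Nat.find (⟨k, fun a => (f a).isLt.ne⟩ : ∃ c, ∀ a, (f a : ℕ) ≠ c)

variable {f : α → Fin k}

lemma le_firstEmpty_iff {w : ℕ} : w ≤ firstEmpty f ↔ ∀ c < w, ∃ a, (f a : ℕ) = c := by
  simp [firstEmpty, Nat.le_find_iff]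

lemma firstEmpty_eq_iff {z : ℕ} :
    firstEmpty f = z ↔ (∀ a, (f a : ℕ) ≠ z) ∧ ∀ c < z, ∃ a, (f a : ℕ) = c := by
  simp [firstEmpty, Nat.find_eq_iff]

lemma val_ne_firstEmpty (a : α) : (f a : ℕ) ≠ firstEmpty f :=
  Nat.find_spec (⟨k, fun a => (f a).isLt.ne⟩ : ∃ c, ∀ a, (f a : ℕ) ≠ c) a

lemma exists_val_eq_of_lt_firstEmpty {c : ℕ} (h : c < firstEmpty f) : ∃ a, (f a : ℕ) = c :=
  le_firstEmpty_iff.mp le_rfl c h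

lemma firstEmpty_le : firstEmpty f ≤ k :=
  Nat.find_min' _ fun a => (f a).isLt.ne

lemma firstEmpty_lt (h : Fintype.card α < k) : firstEmpty f < k := by
  by_contra! hk
  have hsurj : Function.Surjective f := fun c =>
    (exists_val_eq_of_lt_firstEmpty (c.isLt.trans_le hk)).imp fun _ => Fin.ext
  exact (Fintype.card_le_of_surjective f hsurj).not_gt (by simpa using h)

lemma le_card_filter_of_le_firstEmpty {i : ℕ} (h : i ≤ firstEmpty f) :
    i ≤ #{a | (f a : ℕ) < i} := by
  calc i = #(range i) := (card_range i).symm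
    _ ≤ #(image (fun a => (f a : ℕ)) {a | (f a : ℕ) < i}) := by
      refine card_le_card fun c hc => ?_
      obtain ⟨a, ha⟩ := exists_val_eq_of_lt_firstEmpty ((mem_range.mp hc).trans_le h)
      exact mem_image.mpr ⟨a, by simpa [ha] using hc, ha⟩
    _ ≤ _ := card_image_le

end FirstEmpty

lemma one_le_firstEmpty {m : ℕ} {f : Fin (m + 1) → Fin (m + 1)} (hf : IsParking (m + 1) f) :
    1 ≤ firstEmpty f := by
  obtain ⟨a, ha⟩ := card_pos.mp (hf 1 (by omega))
  simp only [mem_filter, mem_univ, true_and, Nat.lt_one_iff] at ha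
  exact le_firstEmpty_iff.mpr fun c hc => ⟨a, by omega⟩

/-- Columns strictly left of `f a` and below the first empty column are occupied, so each column
counted by `domIndex f a` holds a label smaller than `a`. -/
lemma domIndex_le_of_le_firstEmpty {n : ℕ} {f : Fin n → Fin n} {a : Fin n}
    (h : (f a : ℕ) ≤ firstEmpty f) : domIndex f a ≤ a := by
  calc domIndex f a ≤ #(image f (Iio a)) := by
        refine card_le_card fun c hc => ?_
        simp only [mem_filter, mem_univ, true_and] at hc
        obtain ⟨b, hb⟩ := exists_val_eq_of_lt_firstEmpty ((Fin.lt_def.mp hc.1).trans_le h)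
        exact mem_image.mpr ⟨b, mem_Iio.mpr (hc.2 b (Fin.ext hb)), Fin.ext hb⟩
    _ ≤ #(Iio a) := card_image_le
    _ = a := Fin.card_Iio a

section InsertLabel

variable {m : ℕ} {g : Fin m → Fin m} {e c : Fin (m + 1)}

def insertLabel (g : Fin m → Fin m) (e c : Fin (m + 1)) : Fin (m + 1) → Fin (m + 1) :=
  Fin.cons c (e.succAbove ∘ g)

@[simp] lemma insertLabel_zero : insertLabel g e c 0 = c := Fin.cons_zero _ _

@[simp] lemma insertLabel_succ (a : Fin m) : insertLabel g e c a.succ = e.succAbove (g a) :=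
  Fin.cons_succ _ _ _

lemma firstEmpty_succAbove_comp (he : (e : ℕ) ≤ firstEmpty g) :
    firstEmpty (e.succAbove ∘ g) = e := by
  rw [firstEmpty_eq_iff]
  refine ⟨fun a h => Fin.succAbove_ne e (g a) (Fin.ext h), fun j hj => ?_⟩
  obtain ⟨a, ha⟩ := exists_val_eq_of_lt_firstEmpty (hj.trans_le he)
  exact ⟨a, by simp [Fin.val_succAbove_s3, ha, hj]⟩

lemma firstEmpty_insertLabel (hc : c ≤ e) (he : (e : ℕ) ≤ firstEmpty g) :
    firstEmpty (insertLabel g e c) = if c = e then firstEmpty g + 1 else e := by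
  rw [Fin.le_def] at hc
  split_ifs with hce
  · subst hce
    rw [firstEmpty_eq_iff, Fin.forall_fin_succ]
    refine ⟨⟨by rw [insertLabel_zero]; omega, fun a => ?_⟩, fun j hj => ?_⟩
    · have := val_ne_firstEmpty (f := g) a
      simp only [insertLabel_succ, Fin.val_succAbove_s3]
      split_ifs <;> omega
    · rw [Fin.exists_fin_succ]
      rcases lt_trichotomy j c with hjc | rfl | hjc
      · obtain ⟨a, ha⟩ := exists_val_eq_of_lt_firstEmpty (f := g) (by omega : j < firstEmpty g)
        exact Or.inr ⟨a, by simp [Fin.val_succAbove_s3, ha, hjc]⟩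
      · exact Or.inl (by simp)
      · obtain ⟨a, ha⟩ := exists_val_eq_of_lt_firstEmpty (f := g) (by omega : j - 1 < firstEmpty g)
        exact Or.inr ⟨a, by simp only [insertLabel_succ, Fin.val_succAbove_s3, ha]; split_ifs <;> omega⟩
  · have hfe := firstEmpty_succAbove_comp he
    rw [firstEmpty_eq_iff] at hfe ⊢
    refine ⟨Fin.forall_fin_succ.mpr ⟨by simpa [Fin.val_inj] using hce, hfe.1⟩, fun j hj => ?_⟩
    obtain ⟨a, ha⟩ := hfe.2 j hj
    exact ⟨a.succ, by simpa using ha⟩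

lemma insertLabel_inj {g' : Fin m → Fin m} {e' c' : Fin (m + 1)}
    (he : (e : ℕ) ≤ firstEmpty g) (he' : (e' : ℕ) ≤ firstEmpty g')
    (h : insertLabel g e c = insertLabel g' e' c') : g = g' ∧ c = c' := by
  have htail : e.succAbove ∘ g = e'.succAbove ∘ g' := by
    simpa [insertLabel] using congrArg Fin.tail h
  obtain rfl : e = e' := Fin.ext <| by
    rw [← firstEmpty_succAbove_comp he, ← firstEmpty_succAbove_comp he', htail]
  exact ⟨Fin.succAbove_right_injective.comp_left htail, by simpa using congrFun h 0⟩

/-- The new empty column is the leftmost column holding none of the labels `1, …, m`. -/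
lemma exists_eq_insertLabel (f : Fin (m + 1) → Fin (m + 1)) :
    ∃ (g : Fin m → Fin m) (e : Fin (m + 1)),
      (e : ℕ) ≤ firstEmpty g ∧ f = insertLabel g e (f 0) := by
  set e : Fin (m + 1) := ⟨firstEmpty (Fin.tail f), firstEmpty_lt (by simp)⟩
  have hne : ∀ a, Fin.tail f a ≠ e := fun a h => val_ne_firstEmpty a (congrArg Fin.val h)
  choose g hg using fun a => Fin.exists_succAbove_eq (hne a)
  refine ⟨g, e, le_firstEmpty_iff.mpr fun j hj => ?_, ?_⟩
  · obtain ⟨a, ha⟩ := exists_val_eq_of_lt_firstEmpty (f := Fin.tail f) hj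
    refine ⟨a, ?_⟩
    have he : (e : ℕ) = firstEmpty (Fin.tail f) := rfl
    rw [← hg a, Fin.val_succAbove_s3] at ha
    split_ifs at ha <;> omega
  · conv_lhs => rw [← Fin.cons_self_tail f]
    exact congrArg _ (funext fun a => (hg a).symm)

lemma card_insertLabel_lt (hc : c ≤ e) {i : ℕ} (hi : (e : ℕ) ≤ i) :
    #{x | (insertLabel g e c x : ℕ) < i + 1} = #{a | (g a : ℕ) < i} + 1 := by
  rw [Fin.le_def] at hc
  rw [card_filter, card_filter, Fin.sum_univ_succ, add_comm, insertLabel_zero, if_pos (by omega)]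
  congr 1
  refine sum_congr rfl fun a _ => ?_
  simp only [insertLabel_succ, Fin.val_succAbove_s3]
  split_ifs <;> omega

lemma le_firstEmpty_insertLabel (hc : c ≤ e) (he : (e : ℕ) ≤ firstEmpty g) :
    (e : ℕ) ≤ firstEmpty (insertLabel g e c) := by
  rw [firstEmpty_insertLabel hc he]
  split_ifs <;> omega

lemma isParking_insertLabel_iff (hc : c ≤ e) (he : (e : ℕ) ≤ firstEmpty g) :
    IsParking (m + 1) (insertLabel g e c) ↔ IsParking m g := by
  have hfe := le_firstEmpty_insertLabel hc he
  constructor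
  · intro hf i hi
    by_cases hei : (e : ℕ) ≤ i
    · have := hf (i + 1) (by omega)
      rw [card_insertLabel_lt hc hei] at this
      omega
    · exact le_card_filter_of_le_firstEmpty (by omega)
  · rintro hg (_ | i) hi
    · exact Nat.zero_le _
    by_cases hei : (e : ℕ) ≤ i
    · rw [card_insertLabel_lt hc hei]
      exact Nat.succ_le_succ (hg i (by omega))
    · exact le_card_filter_of_le_firstEmpty (by omega)

/-- Column `e` holds at most the label `0`, so it counts towards the dominance index of `a + 1`
exactly when it lies to the left of `a + 1`. -/
lemma domIndex_insertLabel_succ (a : Fin m) :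
    domIndex (insertLabel g e c) a.succ
      = domIndex g a + if e < e.succAbove (g a) then 1 else 0 := by
  unfold domIndex
  rw [card_filter, card_filter, Fin.sum_univ_succAbove _ e, add_comm]
  congr 1
  · refine sum_congr rfl fun d _ => ?_
    simp [(Fin.strictMono_succAbove e).lt_iff_lt, Fin.forall_fin_succ, Fin.succ_pos]
  · simp [Fin.forall_fin_succ, Fin.succ_pos, Fin.succAbove_ne]

lemma le_of_domIndex_insertLabel_zero (h : domIndex (insertLabel g e c) 0 = 0) : c ≤ e := by
  by_contra! hec
  refine (card_pos.mpr ⟨e, ?_⟩).ne' h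
  simp [Fin.forall_fin_succ, hec, hec.ne', Fin.succAbove_ne]

lemma isCPF_insertLabel_iff (hc : c ≤ e) (he : (e : ℕ) ≤ firstEmpty g) :
    IsCPF (m + 1) (insertLabel g e c) ↔ IsCPF m g := by
  have h0 : domIndex (insertLabel g e c) 0 ≤ 0 := domIndex_le_of_le_firstEmpty <| by
    simpa using (Fin.le_def.mp hc).trans (le_firstEmpty_insertLabel hc he)
  have hsucc (a : Fin m) :
      domIndex (insertLabel g e c) a.succ < a.succ + 1 ↔ domIndex g a < a + 1 := by
    rw [domIndex_insertLabel_succ, Fin.val_succ]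
    split_ifs with hlt
    · omega
    · rw [Fin.lt_succAbove_iff_le_castSucc, not_le, Fin.lt_def, Fin.val_castSucc] at hlt
      have := domIndex_le_of_le_firstEmpty (f := g) (a := a) (by omega)
      omega
  simp only [IsCPF, isParking_insertLabel_iff hc he, Fin.forall_fin_succ, hsucc, Fin.val_zero]
  exact and_congr_right fun _ => and_iff_right (by omega)

lemma firstEmpty_insertLabel_eq_succ_iff {z : ℕ} (hc : c ≤ e) (he : (e : ℕ) ≤ firstEmpty g) :
    firstEmpty (insertLabel g e c) = z + 1 ↔
      z ≤ firstEmpty g ∧ (c : ℕ) ≤ z ∧ (e : ℕ) = if z < firstEmpty g then z + 1 else c := by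
  rw [firstEmpty_insertLabel hc he]
  rw [Fin.le_def] at hc
  by_cases hce : c = e
  · subst hce
    simp only [if_true]
    split_ifs <;> omega
  · have := Fin.val_ne_of_ne hce
    simp only [hce, if_false]
    split_ifs <;> omega

end InsertLabel

def cpfCountFrom (n w : ℕ) : ℕ := #{f : Fin n → Fin n | IsCPF n f ∧ w ≤ firstEmpty f}

/-- `f ↦ (g, f 0)`, for `f = insertLabel g e (f 0)`, is a bijection onto the pairs with
`z ≤ firstEmpty g` and `f 0 ≤ z`: the column `e` is recovered as `z + 1` when
`z < firstEmpty g` and as `f 0` otherwise. -/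
lemma card_firstEmpty_eq_succ {m z : ℕ} (hz : z ≤ m) :
    #{f : Fin (m + 1) → Fin (m + 1) | IsCPF (m + 1) f ∧ firstEmpty f = z + 1}
      = (z + 1) * cpfCountFrom m z := by
  let newCol (g : Fin m → Fin m) (c : Fin (m + 1)) : Fin (m + 1) :=
    ⟨if z < firstEmpty g then z + 1 else c, by have := firstEmpty_le (f := g); split_ifs <;> omega⟩
  have hnewCol {g : Fin m → Fin m} {c : Fin (m + 1)} (hzg : z ≤ firstEmpty g) (hcz : (c : ℕ) ≤ z) :
      c ≤ newCol g c ∧ (newCol g c : ℕ) ≤ firstEmpty g := by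
    simp only [newCol, Fin.le_def]
    split_ifs <;> omega
  have hcard : (z + 1) * cpfCountFrom m z
      = #((univ.filter fun g : Fin m → Fin m => IsCPF m g ∧ z ≤ firstEmpty g) ×ˢ
          Iic (⟨z, by omega⟩ : Fin (m + 1))) := by
    rw [card_product, Fin.card_Iic, mul_comm, cpfCountFrom]
  rw [hcard, eq_comm]
  refine card_nbij (fun p => insertLabel p.1 (newCol p.1 p.2) p.2) ?_ ?_ ?_
  · rintro ⟨g, c⟩ hp
    simp only [mem_coe, mem_product, mem_filter, mem_univ, true_and, mem_Iic, Fin.le_def] at hp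
    obtain ⟨⟨hg, hzg⟩, hcz⟩ := hp
    obtain ⟨hc, he⟩ := hnewCol hzg hcz
    simp only [mem_coe, mem_filter, mem_univ, true_and]
    exact ⟨(isCPF_insertLabel_iff hc he).mpr hg,
      (firstEmpty_insertLabel_eq_succ_iff hc he).mpr ⟨hzg, hcz, rfl⟩⟩
  · rintro ⟨g, c⟩ hp ⟨g', c'⟩ hp' h
    simp only [mem_coe, mem_product, mem_filter, mem_univ, true_and, mem_Iic, Fin.le_def] at hp hp'
    obtain ⟨rfl, rfl⟩ := insertLabel_inj (hnewCol hp.1.2 hp.2).2 (hnewCol hp'.1.2 hp'.2).2 h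
    rfl
  · intro f hf
    simp only [mem_coe, mem_filter, mem_univ, true_and] at hf
    obtain ⟨hf, hfz⟩ := hf
    obtain ⟨g, e, he, hfe⟩ := exists_eq_insertLabel f
    rw [hfe] at hf hfz
    have hc : f 0 ≤ e := le_of_domIndex_insertLabel_zero (by simpa using hf.2 0)
    obtain ⟨hzg, hcz, hnew⟩ := (firstEmpty_insertLabel_eq_succ_iff hc he).mp hfz
    refine ⟨(g, f 0), ?_, ?_⟩
    · simp only [mem_coe, mem_product, mem_filter, mem_univ, true_and, mem_Iic, Fin.le_def]
      exact ⟨⟨(isCPF_insertLabel_iff hc he).mp hf, hzg⟩, hcz⟩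
    · rw [hfe]
      exact congrArg₂ _ (Fin.ext hnew.symm) rfl

open Nat

lemma cpfCountFrom_eq_add (n w : ℕ) :
    cpfCountFrom n w
      = cpfCountFrom n (w + 1) + #{f : Fin n → Fin n | IsCPF n f ∧ firstEmpty f = w} := by
  rw [cpfCountFrom, cpfCountFrom, ← card_union_of_disjoint]
  · congr 1
    ext f
    simp only [mem_filter, mem_univ, true_and, mem_union, ← and_or_left]
    exact and_congr_right fun _ => by omega
  · rw [disjoint_filter]
    intro f _ h1 h2
    omega

lemma cpfCountFrom_succ_succ {m z : ℕ} (hz : z ≤ m) :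
    cpfCountFrom (m + 1) (z + 1) = cpfCountFrom (m + 1) (z + 2) + (z + 1) * cpfCountFrom m z := by
  rw [cpfCountFrom_eq_add, card_firstEmpty_eq_succ hz]

lemma cpfCountFrom_succ_zero (m : ℕ) : cpfCountFrom (m + 1) 0 = cpfCountFrom (m + 1) 1 := by
  unfold cpfCountFrom
  congr 1
  exact filter_congr fun f _ => and_congr_right fun hf => iff_of_true (Nat.zero_le _)
    (one_le_firstEmpty hf.1)

lemma cpfCountFrom_of_lt {n w : ℕ} (h : n < w) : cpfCountFrom n w = 0 := by
  rw [cpfCountFrom, Finset.card_eq_zero, filter_eq_empty_iff]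
  exact fun f _ hf => (firstEmpty_le.trans_lt h).not_ge hf.2

lemma cpfCountFrom_zero_zero : cpfCountFrom 0 0 = 1 := by
  rw [cpfCountFrom, filter_true_of_mem, Finset.card_univ, Fintype.card_unique]
  exact fun f _ => ⟨⟨fun i hi => by simp [Nat.le_zero.mp hi], fun a => a.elim0⟩, Nat.zero_le _⟩

theorem cpfCountFrom_mul (w d : ℕ) : cpfCountFrom (w + d) w * (d ! * 2 ^ d) = (w + 2 * d)! := by
  induction d generalizing w with
  | zero =>
    induction w with
    | zero => simp [cpfCountFrom_zero_zero]
    | succ w ih =>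
      simp only [add_zero, mul_zero, factorial_zero, pow_zero, mul_one] at ih ⊢
      rw [cpfCountFrom_succ_succ le_rfl, cpfCountFrom_of_lt (by omega), ih, factorial_succ]
      ring
  | succ d ihd =>
    induction w with
    | zero =>
      have h := ihd 1
      rw [add_comm 1 d, add_comm 1] at h
      rw [zero_add, cpfCountFrom_succ_zero, show 0 + 2 * (d + 1) = 2 * d + 1 + 1 by ring,
        factorial_succ (2 * d + 1), factorial_succ d, pow_succ, ← h]
      ring
    | succ w ihw =>
      have h1 := ihd (w + 2)
      rw [show w + 2 + d = w + d + 1 + 1 by ring, show w + 2 + 2 * d = w + 2 * d + 2 by ring] at h1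
      have h2 := ihw
      rw [← add_assoc, show w + 2 * (d + 1) = w + 2 * d + 2 by ring] at h2
      rw [show w + 1 + (d + 1) = w + d + 1 + 1 by ring, cpfCountFrom_succ_succ (by omega),
        show w + 1 + 2 * (d + 1) = w + 2 * d + 2 + 1 by ring, factorial_succ (w + 2 * d + 2)]
      rw [factorial_succ, pow_succ] at h2 ⊢
      linear_combination (2 * (d + 1)) * h1 + (w + 1) * h2

theorem cpfCount_mul (n : ℕ) : cpfCount n * (n ! * 2 ^ n) = (2 * n)! := by
  have h := cpfCountFrom_mul 0 n
  rw [zero_add, zero_add, cpfCountFrom] at h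
  simpa [cpfCount, Nat.card_eq_fintype_card, Fintype.card_subtype] using h

end CPF

/-- For every n ≥ 2, |CPF(n)| = (2n-1)·|CPF(n-1)|. -/
theorem statement3 (n : ℕ) (hn : 2 ≤ n) :
    cpfCount n = (2 * n - 1) * cpfCount (n - 1) := by
  obtain ⟨m, rfl⟩ : ∃ m, n = m + 1 := ⟨n - 1, by omega⟩
  rw [show 2 * (m + 1) - 1 = 2 * m + 1 by omega, add_tsub_cancel_right]
  refine Nat.eq_of_mul_eq_mul_right (by positivity : 0 < (m + 1).factorial * 2 ^ (m + 1)) ?_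
  rw [CPF.cpfCount_mul, show 2 * (m + 1) = 2 * m + 1 + 1 by ring, Nat.factorial_succ (2 * m + 1),
    Nat.factorial_succ (2 * m), ← CPF.cpfCount_mul m, Nat.factorial_succ m, pow_succ]
  ring
end

section
/- Let n ≥ 2, let k ∈ Comp(n,n), and let 1 ≤ j < i_k. Then k is Catalan if and only if k̃_j is Catalan. (In particular, if k is Catalan then k̃_j is Catalan, and if k is not Catalan then k̃_j is not Catalan.) -/
/-!
Let `t` be `k` with its `j`-th entry decreased by one and `p` the position of the first zero
of `t`, so that `k̃_j` is `t` with its `p`-th entry deleted, and `j ≤ p ≤ i_k`. Prefixes of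
length at most `p` of `k` and of `k̃_j` consist of positive entries, so they satisfy the Catalan
inequality automatically. Beyond `p`, the prefix of `k` of length `i + 1` has sum exactly one
more than the prefix of `k̃_j` of length `i` (one unit was removed at `j`, a zero at `p`), so
the two Catalan inequalities `i + 1 ≤ …` and `i ≤ …` are equivalent.
-/

open Finset

namespace List

theorem getElem_ne_of_lt_idxOf {α : Type*} [BEq α] [LawfulBEq α] {l : List α} {a : α} {i : ℕ}
    (h : i < l.idxOf a) (hi : i < l.length) : l[i] ≠ a := by
  simpa using not_of_lt_findIdx (p := (· == a)) h

theorem le_sum_take_of_le_idxOf_zero {l : List ℕ} {i : ℕ} (h : i ≤ l.idxOf 0) :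
    i ≤ (l.take i).sum := by
  have hil : i ≤ l.length := h.trans idxOf_le_length
  have hpos : ∀ x ∈ l.take i, 1 ≤ x := by
    intro x hx
    obtain ⟨q, hq, rfl⟩ := getElem_of_mem hx
    rw [length_take] at hq
    rw [getElem_take, Nat.one_le_iff_ne_zero]
    exact getElem_ne_of_lt_idxOf (by omega) _
  simpa [hil] using length_le_sum_of_one_le _ hpos

theorem take_erase_of_le_idxOf {α : Type*} [BEq α] [LawfulBEq α] {l : List α} {a : α} {i : ℕ}
    (h : i ≤ l.idxOf a) : (l.erase a).take i = l.take i := by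
  rw [erase_eq_eraseIdx_of_idxOf rfl, take_eraseIdx_eq_take_of_le _ _ _ h]

theorem sum_take_erase_zero_of_idxOf_le {l : List ℕ} {i : ℕ} (h : l.idxOf 0 ≤ i) :
    ((l.erase 0).take i).sum = (l.take (i + 1)).sum := by
  by_cases h0 : 0 ∈ l
  · obtain ⟨as, bs, rfl, has⟩ := eq_append_cons_of_mem h0
    rw [idxOf_append, if_neg has, idxOf_cons_self, zero_add] at h
    rw [erase_append_right _ has, erase_cons_head, take_append, take_append,
      take_of_length_le (l := as) h, take_of_length_le (l := as) (by omega),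
      show i + 1 - as.length = (i - as.length) + 1 by omega]
    simp
  · rw [erase_of_not_mem h0]
    rw [idxOf_eq_length h0] at h
    rw [take_of_length_le h, take_of_length_le (by omega)]

theorem sum_set_add_getElem_s4 {M : Type*} [AddCommMonoid M] (l : List M) {q : ℕ}
    (hq : q < l.length) (v : M) : (l.set q v).sum + l[q] = l.sum + v := by
  rw [sum_set, if_pos hq, ← sum_take_add_sum_drop l (q + 1), sum_take_succ _ _ hq]
  abel

theorem sum_take_set_add_getElem {M : Type*} [AddCommMonoid M] (l : List M) {q i : ℕ}
    (hq : q < l.length) (hqi : q < i) (v : M) :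
    ((l.set q v).take i).sum + l[q] = (l.take i).sum + v := by
  have hqi' : q < (l.take i).length := by rw [length_take]; omega
  rw [take_set, ← getElem_take (j := i) (h := hqi')]
  exact sum_set_add_getElem_s4 _ hqi' v

end List

open List

def decrementAt (k : List ℕ) (j : ℕ) : List ℕ :=
  k.set j (k.getD j 0 - 1)

theorem ktilde_eq_erase_decrementAt (k : List ℕ) (j : ℕ) :
    ktilde k j = (decrementAt k j).erase 0 := rfl

section decrementAt

variable {k : List ℕ} {i j : ℕ}

theorem sum_take_decrementAt_add_one (hj : j < k.idxOf 0) (hji : j < i) :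
    ((decrementAt k j).take i).sum + 1 = (k.take i).sum := by
  have hjk : j < k.length := hj.trans_le idxOf_le_length
  have hkj : k[j] ≠ 0 := getElem_ne_of_lt_idxOf hj hjk
  have := sum_take_set_add_getElem k hjk hji (k[j] - 1)
  rw [decrementAt, getD_eq_getElem _ _ hjk]
  omega

theorem getElem_decrementAt_of_ne {q : ℕ} (hq : q < (decrementAt k j).length) (hqj : j ≠ q) :
    (decrementAt k j)[q] = k[q]'(by simpa [decrementAt] using hq) :=
  getElem_set_ne hqj _

theorem le_idxOf_zero_decrementAt (hj : j < k.idxOf 0) : j ≤ (decrementAt k j).idxOf 0 := by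
  by_contra! hp
  have hpl : (decrementAt k j).idxOf 0 < (decrementAt k j).length :=
    hp.trans (by simpa [decrementAt] using hj.trans_le idxOf_le_length)
  have h0 := getElem_idxOf hpl
  rw [getElem_decrementAt_of_ne hpl hp.ne'] at h0
  exact getElem_ne_of_lt_idxOf (hp.trans hj) _ h0

theorem idxOf_zero_decrementAt_le (hj : j < k.idxOf 0) :
    (decrementAt k j).idxOf 0 ≤ k.idxOf 0 := by
  by_contra! hm
  have hml : k.idxOf 0 < (decrementAt k j).length := hm.trans_le idxOf_le_length
  refine getElem_ne_of_lt_idxOf hm hml ?_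
  rw [getElem_decrementAt_of_ne hml hj.ne]
  exact getElem_idxOf _

theorem le_sum_take_ktilde (hi : i ≤ (decrementAt k j).idxOf 0) :
    i ≤ ((ktilde k j).take i).sum := by
  rw [ktilde_eq_erase_decrementAt, take_erase_of_le_idxOf hi]
  exact le_sum_take_of_le_idxOf_zero hi

theorem sum_take_ktilde_add_one (hj : j < k.idxOf 0) (hi : (decrementAt k j).idxOf 0 ≤ i) :
    ((ktilde k j).take i).sum + 1 = (k.take (i + 1)).sum := by
  rw [ktilde_eq_erase_decrementAt, sum_take_erase_zero_of_idxOf_le hi]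
  exact sum_take_decrementAt_add_one hj (by have := le_idxOf_zero_decrementAt hj; omega)

end decrementAt

theorem statement4_general (n : ℕ) (k : List ℕ)
    (j : ℕ) (hj1 : 1 ≤ j) (hj2 : j < k.idxOf 0 + 1) :
    IsCatalan n k ↔ IsCatalan (n - 1) (ktilde k (j - 1)) := by
  obtain ⟨j, rfl⟩ : ∃ j', j = j' + 1 := ⟨j - 1, by omega⟩
  have hj : j < k.idxOf 0 := by omega
  set p := (decrementAt k j).idxOf 0
  have hpk : p ≤ k.idxOf 0 := idxOf_zero_decrementAt_le hj
  rw [Nat.add_sub_cancel]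
  constructor
  · intro hk i hi
    rcases le_total i p with hip | hpi
    · exact le_sum_take_ktilde hip
    · have := sum_take_ktilde_add_one hj hpi
      have := hk (i + 1) (by omega)
      omega
  · intro hk i hi
    rcases le_or_gt i p with hip | hpi
    · exact le_sum_take_of_le_idxOf_zero (hip.trans hpk)
    · obtain ⟨i, rfl⟩ : ∃ i', i = i' + 1 := ⟨i - 1, by omega⟩
      have := sum_take_ktilde_add_one hj (i := i) (by omega)
      have := hk i (by omega)
      omega

/-- Let n ≥ 2, k ∈ Comp(n,n), and 1 ≤ j < i_k (here `j` is 1-based and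
i_k = k.indexOf 0 + 1).  Then k is Catalan iff k̃_j is Catalan. -/
theorem statement4 (n : ℕ) (hn : 2 ≤ n) (k : List ℕ)
    (hlen : k.length = n) (hsum : k.sum = n)
    (j : ℕ) (hj1 : 1 ≤ j) (hj2 : j < k.idxOf 0 + 1) :
    IsCatalan n k ↔ IsCatalan (n - 1) (ktilde k (j - 1)) :=
  statement4_general n k j hj1 hj2
end

section
/- For all n ≥ 2 and all 2 ≤ i ≤ n+1, the generating functions of asymmetric multinomial coefficients satisfy F_{n,i}(x_1,…,x_n) = Σ_{j=1}^{i−1} x_j·F_{n−1,i−1}(X∖x_j) + (x_1+⋯+x_{i−1})·Σ_{ℓ=i}^{n} F_{n−1,ℓ}(X∖x_i), with initial condition F_{1,2}(x_1)=x_1 (when i=n+1 the second sum is empty and the term is 0). Moreover F_n = Σ_{i=2}^{n+1} F_{n,i}. -/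
open Finset

/-- The order-preserving embedding `Fin m → Fin (m+1)` skipping the (0-based) index `t`:
used to express evaluation of a polynomial in m variables at `X ∖ x_{t+1}`. -/
def skip (m t : ℕ) : Fin m → Fin (m + 1) := fun p =>
  if (p : ℕ) < t then p.castSucc else p.succ

/-- F_{n,i}(x_1,…,x_n) = Σ_{k ∈ Comp(n,n,i)} ⟨⟨n;k⟩⟩ x_1^{k_1}⋯x_n^{k_n},
where Comp(n,n,i) is the set of k ∈ Comp(n,n) with i_k = i. -/
noncomputable def Fni (n i : ℕ) : MvPolynomial (Fin n) ℤ :=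
  ∑ v ∈ (Finset.Nat.antidiagonalTuple n n).filter
      (fun v => (List.ofFn v).idxOf 0 + 1 = i),
    MvPolynomial.C (amc n (List.ofFn v) : ℤ) * ∏ t : Fin n, MvPolynomial.X t ^ v t

/-- F_n(x_1,…,x_n) = Σ_{k ∈ Comp(n,n)} ⟨⟨n;k⟩⟩ x_1^{k_1}⋯x_n^{k_n}. -/
noncomputable def Fpoly (n : ℕ) : MvPolynomial (Fin n) ℤ :=
  ∑ v ∈ Finset.Nat.antidiagonalTuple n n,
    MvPolynomial.C (amc n (List.ofFn v) : ℤ) * ∏ t : Fin n, MvPolynomial.X t ^ v t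

/-!
Expanding `⟨⟨n;k⟩⟩` by its recursion and exchanging the two sums writes `F_{n,i}` as
`Σ_{j<i} Σ_k ⟨⟨n-1;k̃_j⟩⟩ x^k`, with `k` running over `Comp(n,n,i)`. For fixed `j`, the map
`k ↦ k̃_j` is a bijection from the `k` with `k_j = 1` onto `Comp(n-1,n-1,i-1)` (the deleted zero is
the one created at `j`), and from the `k` with `k_j ≥ 2` onto the compositions whose leftmost zero
lies at position `≥ i` (the deleted zero is the one at `i`). In both cases `x^k` is `x_j` times
`x^{k̃_j}` evaluated at `X ∖ x_p`, `p` the position of the deleted zero. For `i = n + 1` the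
second set is empty: a composition of `n` into `n` positive parts has all parts equal to `1`.
-/

namespace List

variable {α : Type*} {m n : ℕ}

theorem ofFn_insertNth (j : Fin (m + 1)) (a : α) (w : Fin m → α) :
    List.ofFn (j.insertNth a w) = (List.ofFn w).insertIdx j a := by
  refine List.ext_getElem (by simp [List.length_insertIdx, Nat.lt_succ_iff.mp j.isLt]) ?_
  intro i h₁ h₂
  simp only [List.getElem_ofFn, List.getElem_insertIdx]
  split_ifs with hlt heq
  · simp [Fin.insertNth_apply_below (Fin.mk_lt_of_lt_val hlt), Fin.castPred]
    exact eq_rec_constant _ _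
  · simp [show (⟨i, _⟩ : Fin (m + 1)) = j from Fin.ext heq]
  · have hji : j < ⟨i, by simpa using h₁⟩ := Fin.lt_def.2 (by simp; omega)
    simp [Fin.insertNth_apply_above hji, Fin.pred]

theorem ofFn_removeNth (j : Fin (m + 1)) (v : Fin (m + 1) → α) :
    List.ofFn (j.removeNth v) = (List.ofFn v).eraseIdx j := by
  conv_rhs => rw [← Fin.insertNth_self_removeNth j v, List.ofFn_insertNth,
    List.eraseIdx_insertIdx_self]

theorem ofFn_update (v : Fin n → α) (j : Fin n) (a : α) :
    List.ofFn (Function.update v j a) = (List.ofFn v).set j a := by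
  refine List.ext_getElem (by simp) fun i h₁ h₂ => ?_
  simp [List.getElem_set, Function.update_apply, Fin.ext_iff, eq_comm]

theorem getD_ofFn (v : Fin n → α) (j : Fin n) (d : α) : (List.ofFn v).getD j d = v j := by
  simp

variable [DecidableEq α]

theorem idxOf_insertIdx_self (a : α) (l : List α) (i : ℕ) :
    (l.insertIdx i a).idxOf a = min i (l.idxOf a) := by
  induction l generalizing i with
  | nil => cases i <;> simp
  | cons x l ih =>
    cases i with
    | zero => simp
    | succ i =>
      by_cases h : x = a
      · simp [h]
      · simp [idxOf_cons_ne _ h, ih, Nat.succ_min_succ]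

theorem idxOf_insertIdx_of_ne {a b : α} (h : a ≠ b) (l : List α) (i : ℕ) :
    (l.insertIdx i a).idxOf b = if i ≤ l.idxOf b then l.idxOf b + 1 else l.idxOf b := by
  induction l generalizing i with
  | nil => cases i <;> simp [idxOf_cons_ne _ h]
  | cons x l ih =>
    cases i with
    | zero => simp [idxOf_cons_ne _ h]
    | succ i =>
      by_cases hx : x = b
      · simp [hx]
      · simp only [insertIdx_succ_cons, idxOf_cons_ne _ hx, ih]
        split_ifs <;> omega

theorem idxOf_ofFn_insertNth_self (j : Fin (m + 1)) (a : α) (w : Fin m → α) :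
    (List.ofFn (j.insertNth a w)).idxOf a = min (j : ℕ) ((List.ofFn w).idxOf a) := by
  rw [List.ofFn_insertNth, List.idxOf_insertIdx_self]

theorem idxOf_ofFn_insertNth_of_ne {a b : α} (h : a ≠ b) (j : Fin (m + 1)) (w : Fin m → α) :
    (List.ofFn (j.insertNth a w)).idxOf b =
      if (j : ℕ) ≤ (List.ofFn w).idxOf b then (List.ofFn w).idxOf b + 1
      else (List.ofFn w).idxOf b := by
  rw [List.ofFn_insertNth, List.idxOf_insertIdx_of_ne h]

theorem idxOf_ofFn_congr {v u : Fin n → α} {b : α} (h : ∀ q, v q = b ↔ u q = b) :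
    (List.ofFn v).idxOf b = (List.ofFn u).idxOf b := by
  simp only [List.idxOf, List.ofFn_eq_map, List.findIdx_map]
  congr 1
  funext q
  simp [h q]

theorem idxOf_ofFn_le (v : Fin n → α) (b : α) : (List.ofFn v).idxOf b ≤ n := by
  simpa using List.idxOf_le_length (a := b) (l := List.ofFn v)

theorem ne_of_lt_idxOf_ofFn {v : Fin n → α} {b : α} {q : Fin n}
    (h : (q : ℕ) < (List.ofFn v).idxOf b) : v q ≠ b := by
  simpa using List.not_of_lt_findIdx (p := (· == b)) (xs := List.ofFn v) (i := q) h

theorem eq_of_idxOf_ofFn_eq {v : Fin n → α} {b : α} {q : Fin n}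
    (h : (List.ofFn v).idxOf b = q) : v q = b := by
  have hlt : (List.ofFn v).idxOf b < (List.ofFn v).length := by simp [h]
  simpa [h] using List.getElem_idxOf hlt

end List

open MvPolynomial

section Compositions

variable {m n : ℕ}

lemma skip_val_eq_succAbove (t : Fin (m + 1)) : skip m t = t.succAbove := by
  funext p
  simp only [skip, Fin.succAbove, Fin.lt_def, Fin.val_castSucc]

lemma amc_succ (hm : 1 ≤ m) (k : List ℕ) :
    amc (m + 1) k = ∑ j ∈ range (k.idxOf 0), amc m (ktilde k j) := by
  obtain ⟨m, rfl⟩ := Nat.exists_eq_add_of_le' hm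
  rfl

lemma amc_eq_zero_of_idxOf_eq_zero {k : List ℕ} (hk : k.idxOf 0 = 0) : amc n k = 0 := by
  match n with
  | 0 => rfl
  | 1 =>
    rw [amc, if_neg]
    rintro rfl
    simp at hk
  | n + 2 => simp [amc, hk]

lemma eq_one_of_idxOf_ofFn_eq {v : Fin n → ℕ} (hsum : ∑ t, v t = n)
    (hv : (List.ofFn v).idxOf 0 = n) (j : Fin n) : v j = 1 := by
  have hpos : ∀ t ∈ (univ : Finset (Fin n)), 1 ≤ v t := fun t _ =>
    Nat.one_le_iff_ne_zero.2 (List.ne_of_lt_idxOf_ofFn (by rw [hv]; exact t.isLt))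
  have hsum_eq : ∑ _t : Fin n, (1 : ℕ) = ∑ t, v t := by simp [hsum]
  exact ((Finset.sum_eq_sum_iff_of_le hpos).1 hsum_eq j (mem_univ j)).symm

/-- The inverse of `k ↦ k̃_j` on the compositions `k` for which the zero deleted by `k̃_j` sits at
position `p`. -/
def insertZeroAddSingle (p j : Fin (m + 1)) : (Fin m → ℕ) ↪ (Fin (m + 1) → ℕ) where
  toFun w := p.insertNth 0 w + Pi.single j 1
  inj' _ _ h := Fin.insertNth_injective2 (add_right_cancel h) |>.2

lemma insertZeroAddSingle_apply (p j : Fin (m + 1)) (w : Fin m → ℕ) :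
    insertZeroAddSingle p j w = p.insertNth 0 w + Pi.single j 1 := rfl

lemma insertZeroAddSingle_self (j : Fin (m + 1)) (w : Fin m → ℕ) :
    insertZeroAddSingle j j w = j.insertNth 1 w := by
  rw [insertZeroAddSingle_apply, ← Fin.insertNth_zero_right, ← Fin.insertNth_add, zero_add,
    add_zero]

lemma ktilde_insertZeroAddSingle {p : Fin (m + 1)} {w : Fin m → ℕ}
    (hp : (p : ℕ) ≤ (List.ofFn w).idxOf 0) (j : Fin (m + 1)) :
    ktilde (List.ofFn (insertZeroAddSingle p j w)) j = List.ofFn w := by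
  have hsub : Function.update (insertZeroAddSingle p j w) j (insertZeroAddSingle p j w j - 1)
      = p.insertNth 0 w := by
    funext t
    by_cases ht : t = j
    · subst ht; simp [insertZeroAddSingle_apply]
    · simp [insertZeroAddSingle_apply, ht]
  have hidx : (List.ofFn (p.insertNth 0 w)).idxOf 0 = p := by
    rw [List.idxOf_ofFn_insertNth_self, min_eq_left hp]
  rw [ktilde, List.getD_ofFn, ← List.ofFn_update, hsub, List.erase_eq_eraseIdx_of_idxOf hidx,
    ← List.ofFn_removeNth, Fin.removeNth_insertNth]

lemma prod_X_pow_insertZeroAddSingle {R : Type*} [CommSemiring R] (p j : Fin (m + 1))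
    (w : Fin m → ℕ) :
    ∏ t, (X t : MvPolynomial (Fin (m + 1)) R) ^ insertZeroAddSingle p j w t
      = X j * rename p.succAbove (∏ s, X s ^ w s) := by
  simp only [insertZeroAddSingle_apply, Pi.add_apply, pow_add, prod_mul_distrib,
    Fin.prod_univ_succAbove (fun t => (X t : MvPolynomial (Fin (m + 1)) R) ^ p.insertNth 0 w t) p]
  simp [Pi.single_apply, map_prod, mul_comm]

lemma sum_ktilde_map_insertZeroAddSingle (p j : Fin (m + 1)) {T : Finset (Fin m → ℕ)}
    (hT : ∀ w ∈ T, (p : ℕ) ≤ (List.ofFn w).idxOf 0) :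
    ∑ v ∈ T.map (insertZeroAddSingle p j),
        C (amc m (ktilde (List.ofFn v) j) : ℤ) * ∏ t, X t ^ v t
      = X j * rename p.succAbove
          (∑ w ∈ T, C (amc m (List.ofFn w) : ℤ) * ∏ t, X t ^ w t) := by
  rw [sum_map, map_sum, mul_sum]
  refine sum_congr rfl fun w hw => ?_
  rw [ktilde_insertZeroAddSingle (hT w hw), prod_X_pow_insertZeroAddSingle, map_mul, rename_C]
  ring

lemma filter_apply_eq_one_eq_map {p : ℕ} {j : Fin (m + 1)} (hj : (j : ℕ) < p) :
    (Nat.antidiagonalTuple (m + 1) (m + 1)).filter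
        (fun v => (List.ofFn v).idxOf 0 = p ∧ v j = 1)
      = ((Nat.antidiagonalTuple m m).filter (fun w => (List.ofFn w).idxOf 0 + 1 = p)).map
          (insertZeroAddSingle j j) := by
  ext v
  simp only [mem_filter, mem_map, insertZeroAddSingle_self, Nat.mem_antidiagonalTuple]
  constructor
  · rintro ⟨hsum, hidx, hvj⟩
    have hv : j.insertNth 1 (j.removeNth v) = v := by
      rw [Fin.insertNth_removeNth]
      exact Function.update_eq_self_iff.2 hvj.symm
    refine ⟨j.removeNth v, ⟨?_, ?_⟩, hv⟩
    · rw [← hv, Fin.sum_insertNth] at hsum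
      omega
    · rw [← hv, List.idxOf_ofFn_insertNth_of_ne one_ne_zero] at hidx
      split_ifs at hidx <;> omega
  · rintro ⟨w, ⟨hsum, hidx⟩, rfl⟩
    refine ⟨by rw [Fin.sum_insertNth, hsum, add_comm], ?_, Fin.insertNth_apply_same ..⟩
    rw [List.idxOf_ofFn_insertNth_of_ne one_ne_zero, if_pos (by omega)]
    omega

lemma filter_apply_ne_one_eq_map {p j : Fin (m + 1)} (hj : j < p) :
    (Nat.antidiagonalTuple (m + 1) (m + 1)).filter
        (fun v => (List.ofFn v).idxOf 0 = p ∧ v j ≠ 1)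
      = ((Nat.antidiagonalTuple m m).filter (fun w => (p : ℕ) ≤ (List.ofFn w).idxOf 0)).map
          (insertZeroAddSingle p j) := by
  ext v
  simp only [mem_filter, mem_map, insertZeroAddSingle_apply, Nat.mem_antidiagonalTuple]
  constructor
  · rintro ⟨hsum, hidx, hvj⟩
    have hvj0 : v j ≠ 0 := List.ne_of_lt_idxOf_ofFn (by rw [hidx]; exact hj)
    set u := v - Pi.single j 1
    have hvu : v = u + Pi.single j 1 := by
      funext t
      by_cases ht : t = j
      · subst ht; simp [u]; omega
      · simp [u, ht]
    have huidx : (List.ofFn u).idxOf 0 = p := by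
      rw [← hidx]
      refine List.idxOf_ofFn_congr fun t => ?_
      by_cases ht : t = j
      · subst ht; simp [u]; omega
      · simp [u, ht]
    have hup : u p = 0 := List.eq_of_idxOf_ofFn_eq huidx
    have hu : p.insertNth 0 (p.removeNth u) = u := by
      rw [Fin.insertNth_removeNth]
      exact Function.update_eq_self_iff.2 hup.symm
    refine ⟨p.removeNth u, ⟨?_, ?_⟩, ?_⟩
    · rw [hvu] at hsum
      simp only [Pi.add_apply, sum_add_distrib, Finset.sum_pi_single', mem_univ, if_true,
        Fin.sum_univ_succAbove u p, hup] at hsum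
      simpa [Fin.removeNth] using hsum
    · rw [← hu, List.idxOf_ofFn_insertNth_self] at huidx
      omega
    · rw [hu, hvu]
  · rintro ⟨w, ⟨hsum, hidx⟩, rfl⟩
    have hidx' : (List.ofFn (p.insertNth 0 w)).idxOf 0 = p := by
      rw [List.idxOf_ofFn_insertNth_self]
      omega
    have hj0 : p.insertNth (α := fun _ => ℕ) 0 w j ≠ 0 :=
      List.ne_of_lt_idxOf_ofFn (by rw [hidx']; exact hj)
    refine ⟨?_, ?_, ?_⟩
    · simp [sum_add_distrib, Fin.sum_insertNth, hsum]
    · rw [← hidx']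
      exact List.idxOf_ofFn_congr fun t => by by_cases ht : t = j <;> simp [ht, hj0]
    · simp [hj0]

lemma sum_range_eq_sum_filter_val_lt {M : Type*} [AddCommMonoid M] {p : ℕ} (hp : p ≤ n)
    (f : ℕ → M) :
    ∑ q ∈ range p, f q = ∑ j ∈ univ.filter (fun j : Fin n => (j : ℕ) < p), f j := by
  calc ∑ q ∈ range p, f q
      = ∑ q ∈ (univ.filter (fun j : Fin n => (j : ℕ) < p)).map Fin.valEmbedding, f q := by
        congr 1
        ext q
        simp only [mem_range, mem_map, mem_filter, mem_univ, true_and, Fin.valEmbedding_apply]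
        exact ⟨fun hq => ⟨⟨q, by omega⟩, hq, rfl⟩, by rintro ⟨j, hj, rfl⟩; exact hj⟩
    _ = _ := sum_map _ _ _

lemma sum_Icc_Fni (n i : ℕ) :
    ∑ ℓ ∈ Icc i (n + 1), Fni n ℓ
      = ∑ v ∈ (Nat.antidiagonalTuple n n).filter (fun v => i ≤ (List.ofFn v).idxOf 0 + 1),
          C (amc n (List.ofFn v) : ℤ) * ∏ t, X t ^ v t := by
  simp only [Fni]
  rw [sum_fiberwise_eq_sum_filter]
  refine sum_congr (filter_congr fun v _ => ?_) fun _ _ => rfl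
  have := List.idxOf_ofFn_le v 0
  simp only [mem_Icc]
  omega

lemma sum_amc_ktilde {p : ℕ} (hp : p ≤ m + 1) {j : Fin (m + 1)} (hj : (j : ℕ) < p) :
    ∑ v ∈ (Nat.antidiagonalTuple (m + 1) (m + 1)).filter (fun v => (List.ofFn v).idxOf 0 = p),
        C (amc m (ktilde (List.ofFn v) j) : ℤ) * ∏ t, X t ^ v t
      = X j * rename (skip m j) (Fni m p)
        + X j * ∑ ℓ ∈ Icc (p + 1) (m + 1), rename (skip m p) (Fni m ℓ) := by
  rw [← sum_filter_add_sum_filter_not _ (fun v => v j = 1), filter_filter, filter_filter,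
    filter_apply_eq_one_eq_map hj,
    sum_ktilde_map_insertZeroAddSingle j j fun w hw => by have := (mem_filter.1 hw).2; omega,
    skip_val_eq_succAbove]
  congr 1
  rcases hp.lt_or_eq with hp | rfl
  · obtain ⟨p, rfl⟩ : ∃ p' : Fin (m + 1), (p' : ℕ) = p := ⟨⟨p, hp⟩, rfl⟩
    rw [filter_apply_ne_one_eq_map hj,
      sum_ktilde_map_insertZeroAddSingle p j fun w hw => (mem_filter.1 hw).2,
      skip_val_eq_succAbove, ← map_sum, sum_Icc_Fni]
    simp only [add_le_add_iff_right]
  · have hempty : (Nat.antidiagonalTuple (m + 1) (m + 1)).filter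
        (fun v => (List.ofFn v).idxOf 0 = m + 1 ∧ ¬ v j = 1) = ∅ :=
      filter_eq_empty_iff.2 fun v hv ⟨hidx, hvj⟩ =>
        hvj (eq_one_of_idxOf_ofFn_eq (Nat.mem_antidiagonalTuple.1 hv) hidx j)
    rw [hempty, Icc_eq_empty (by omega), sum_empty, sum_empty, mul_zero]

lemma Fni_succ (hm : 1 ≤ m) {p : ℕ} (hp : p ≤ m + 1) :
    Fni (m + 1) (p + 1) =
      (∑ j ∈ univ.filter (fun j : Fin (m + 1) => (j : ℕ) < p),
          X j * rename (skip m j) (Fni m p)) +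
      (∑ j ∈ univ.filter (fun j : Fin (m + 1) => (j : ℕ) < p), X j) *
        ∑ ℓ ∈ Icc (p + 1) (m + 1), rename (skip m p) (Fni m ℓ) := by
  have hexpand : Fni (m + 1) (p + 1) =
      ∑ v ∈ (Nat.antidiagonalTuple (m + 1) (m + 1)).filter (fun v => (List.ofFn v).idxOf 0 = p),
        ∑ j ∈ univ.filter (fun j : Fin (m + 1) => (j : ℕ) < p),
          C (amc m (ktilde (List.ofFn v) j) : ℤ) * ∏ t, X t ^ v t := by
    simp only [Fni, Nat.add_right_cancel_iff]
    refine sum_congr rfl fun v hv => ?_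
    rw [amc_succ hm, (mem_filter.1 hv).2, sum_range_eq_sum_filter_val_lt hp, Nat.cast_sum,
      map_sum, sum_mul]
  rw [hexpand, sum_comm, sum_mul, ← sum_add_distrib]
  exact sum_congr rfl fun j hj => sum_amc_ktilde hp (mem_filter.1 hj).2

lemma Fni_one_two : Fni 1 2 = X 0 := by
  have hcomp : Nat.antidiagonalTuple 1 1 = {fun _ => 1} := by
    ext v
    simp only [Nat.mem_antidiagonalTuple, Fin.sum_univ_one, mem_singleton]
    exact ⟨fun h => funext fun t => by rw [Subsingleton.elim t 0, h], fun h => by rw [h]⟩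
  rw [Fni, hcomp, filter_singleton, if_pos (by decide), sum_singleton,
    show amc 1 (List.ofFn fun _ : Fin 1 => 1) = 1 by decide]
  simp

lemma Fpoly_eq_sum_Fni (n : ℕ) : Fpoly n = ∑ i ∈ Icc 2 (n + 1), Fni n i := by
  rw [sum_Icc_Fni, Fpoly, sum_filter_of_ne]
  intro v _ hv
  contrapose! hv
  rw [amc_eq_zero_of_idxOf_eq_zero (by omega), Nat.cast_zero, C_0, zero_mul]

end Compositions

/-- For all n ≥ 2 (written n = m+1, m ≥ 1) and all 2 ≤ i ≤ n+1,
F_{n,i}(X) = Σ_{j=1}^{i-1} x_j·F_{n-1,i-1}(X∖x_j)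
           + (x_1+⋯+x_{i-1})·Σ_{ℓ=i}^{n} F_{n-1,ℓ}(X∖x_i),
with initial condition F_{1,2}(x_1) = x_1; moreover F_n = Σ_{i=2}^{n+1} F_{n,i}.
(Variables are 0-based: x_j is `X ⟨j-1⟩`.) -/
theorem statement10 :
    Fni 1 2 = MvPolynomial.X 0 ∧
    (∀ m : ℕ, 1 ≤ m → ∀ i : ℕ, 2 ≤ i → i ≤ m + 2 →
      Fni (m + 1) i =
        (∑ j ∈ Finset.univ.filter (fun j : Fin (m + 1) => (j : ℕ) < i - 1),
            MvPolynomial.X j * MvPolynomial.rename (skip m (j : ℕ)) (Fni m (i - 1))) +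
        (∑ j ∈ Finset.univ.filter (fun j : Fin (m + 1) => (j : ℕ) < i - 1),
            MvPolynomial.X j) *
          ∑ ℓ ∈ Finset.Icc i (m + 1),
            MvPolynomial.rename (skip m (i - 1)) (Fni m ℓ)) ∧
    (∀ n : ℕ, 2 ≤ n → Fpoly n = ∑ i ∈ Finset.Icc 2 (n + 1), Fni n i) := by
  refine ⟨Fni_one_two, fun m hm i hi hi' => ?_, fun n _ => Fpoly_eq_sum_Fni n⟩
  obtain ⟨p, rfl⟩ := Nat.exists_eq_add_of_le' (by omega : 1 ≤ i)
  exact Fni_succ hm (by omega)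
end
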